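/- arXiv:2403.13650 — 11 statements merged into one kernel-verified Lean document; each statement's English description precedes it below -/
import Mathlib

section
/- Let D be a noncommutative division ring of characteristic 2, let n be a nonnegative integer with n = 2, and let f, g : D → D be additive maps such that f(x) = x^2 · g(x⁻¹) for all nonzero x ∈ D. Then f = g and f(x) = x · f(1) for all x ∈ D. -/
set_option maxHeartbeats 2000000 in
lemma keyT {D : Type*} [DivisionRing D] [CharP D 2]
    (hnc : ∃ a b : D, a * b ≠ b * a)
    (T : D → D) (hadd : ∀ x y : D, T (x + y) = T x + T y)
    (h1 : T 1 = 0)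
    (hinv : ∀ x : D, x ≠ 0 → T x = x * x * T x⁻¹) :
    ∀ x : D, T x = 0 := by
  -- char two basics
  have two0 : (2:D) = 0 := by exact_mod_cast CharP.cast_eq_zero D 2
  have addself : ∀ a : D, a + a = 0 := fun a => by rw [← two_mul, two0, zero_mul]
  have addcancel : ∀ a b : D, a + b = 0 → a = b := by
    intro a b hab
    calc a = a + 0 := (add_zero a).symm
    _ = a + (b + b) := by rw [addself]
    _ = (a + b) + b := (add_assoc a b b).symm
    _ = b := by rw [hab, zero_add]
  have hT0 : T 0 = 0 := by
    have h := hadd 0 0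
    rw [add_zero] at h
    have : T 0 + T 0 = T 0 + 0 := by rw [← h, add_zero]
    exact add_left_cancel this
  have hTinv' : ∀ x : D, x ≠ 0 → T x⁻¹ = (x*x)⁻¹ * T x := by
    intro x hx
    rw [hinv x hx, ← mul_assoc, inv_mul_cancel₀ (mul_ne_zero hx hx), one_mul]
  have hcancel : ∀ a b c : D, b ≠ 0 → (a * b) * (b⁻¹ * c) = a * c := by
    intro a b c hb
    rw [mul_assoc, ← mul_assoc b, mul_inv_cancel₀ hb, one_mul]
  have invadd : ∀ A B : D, A ≠ 0 → B ≠ 0 → B + A = 1 → A⁻¹ + B⁻¹ = A⁻¹ * B⁻¹ := by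
    intro A B hA hB hBA
    have e : A⁻¹ * ((B + A) * B⁻¹) = A⁻¹ + B⁻¹ := by
      rw [add_mul, mul_inv_cancel₀ hB, mul_add, mul_one, ← mul_assoc,
        inv_mul_cancel₀ hA, one_mul, add_comm]
    rw [hBA, one_mul] at e
    exact e.symm
  -- squares are in the kernel
  have hsq : ∀ x : D, T (x * x) = 0 := by
    intro x
    by_cases hx0 : x = 0
    · simp [hx0, hT0]
    by_cases hx1 : x = 1
    · simp [hx1, h1]
    have hB : x + 1 ≠ 0 := fun hh => hx1 (addcancel x 1 hh)
    have hy0 : x * (x+1) ≠ 0 := mul_ne_zero hx0 hB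
    have hBA : x + (x+1) = 1 := by rw [← add_assoc, addself, zero_add]
    have hinvsum : (x*(x+1))⁻¹ = x⁻¹ + (x+1)⁻¹ := by
      rw [mul_inv_rev, add_comm x⁻¹ (x+1)⁻¹]
      exact (invadd (x+1) x hB hx0 hBA).symm
    have hTx1 : T (x+1) = T x := by rw [hadd, h1, add_zero]
    have e1 : T (x*(x+1)) = (x*(x+1))*(x*(x+1)) * T ((x*(x+1))⁻¹) := hinv _ hy0
    rw [hinvsum, hadd, hTinv' x hx0, hTinv' (x+1) hB, hTx1,
      mul_add (x*(x+1)*(x*(x+1)))] at e1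
    have sq1 : (x*(x+1))*(x*(x+1)) = ((x+1)*(x+1)) * (x*x) := by noncomm_ring
    have sq2 : (x*(x+1))*(x*(x+1)) = (x*x) * ((x+1)*(x+1)) := by noncomm_ring
    rw [show (x*(x+1))*(x*(x+1)) * ((x*x)⁻¹ * T x) = ((x+1)*(x+1)) * T x from by
        rw [sq1]; exact hcancel _ _ _ (mul_ne_zero hx0 hx0),
      show (x*(x+1))*(x*(x+1)) * (((x+1)*(x+1))⁻¹ * T x) = (x*x) * T x from by
        rw [sq2]; exact hcancel _ _ _ (mul_ne_zero hB hB)] at e1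
    have e2 : T (x*(x+1)) = T (x*x) + T x := by
      rw [mul_add, mul_one, hadd]
    have sq3 : (x+1)*(x+1) = x*x + 1 := by
      have h5 : (x+1)*(x+1) = x*x + ((x + x) + 1) := by noncomm_ring
      rw [h5, addself, zero_add]
    rw [e2, sq3, add_mul, one_mul] at e1
    have e3 : (x*x * T x + T x) + x*x * T x = T x := by
      rw [add_right_comm, addself, zero_add]
    rw [e3] at e1
    exact add_right_cancel (e1.trans (zero_add (T x)).symm)
  -- commutator-type elements are in the kernel
  have hcomm0 : ∀ a b : D, T (a*b + b*a) = 0 := by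
    intro a b
    have e : (a+b)*(a+b) = a*a + ((a*b + b*a) + b*b) := by noncomm_ring
    have e2 := hsq (a+b)
    rw [e, hadd, hadd, hsq a, hsq b, add_zero, zero_add] at e2
    exact e2
  have hswap : ∀ a b : D, T (a*b) = T (b*a) := by
    intro a b
    have := hcomm0 a b
    rw [hadd] at this
    exact addcancel _ _ this
  have hconj : ∀ u : D, u ≠ 0 → ∀ y : D, T (u*y*u⁻¹) = T y := by
    intro u hu y
    have := hswap (u*y) u⁻¹
    rw [← mul_assoc, inv_mul_cancel₀ hu, one_mul] at this
    exact this
  -- nonzero values of T force central squares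
  have hcent : ∀ x : D, T x ≠ 0 → ∀ u : D, u * (x*x) = (x*x) * u := by
    intro x hx u
    have hx0 : x ≠ 0 := fun hh => hx (hh ▸ hT0)
    have hP0 : x*x ≠ 0 := mul_ne_zero hx0 hx0
    by_cases hu : u = 0
    · rw [hu, zero_mul, mul_zero]
    have hA0 : u*x*u⁻¹ ≠ 0 := by
      exact mul_ne_zero (mul_ne_zero hu hx0) (inv_ne_zero hu)
    have eA : T (u*x*u⁻¹) = T x := hconj u hu x
    have eB : T (u*x*u⁻¹) = (u*x*u⁻¹)*(u*x*u⁻¹) * T ((u*x*u⁻¹))⁻¹ := hinv _ hA0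
    have eInv : (u*x*u⁻¹)⁻¹ = u*x⁻¹*u⁻¹ := by
      rw [mul_inv_rev, mul_inv_rev, inv_inv, mul_assoc]
    have eSq : (u*x*u⁻¹)*(u*x*u⁻¹) = u*(x*x)*u⁻¹ := by
      simp only [mul_assoc]
      rw [← mul_assoc u⁻¹ u, inv_mul_cancel₀ hu, one_mul]
    have eC : T (u*x⁻¹*u⁻¹) = (x*x)⁻¹ * T x := by
      rw [show u*x⁻¹*u⁻¹ = u*x⁻¹*u⁻¹ from rfl]
      rw [hconj u hu x⁻¹, hTinv' x hx0]
    rw [eA, eInv, eSq, eC] at eB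
    -- eB : T x = u*(x*x)*u⁻¹ * ((x*x)⁻¹ * T x)
    have eB2 : T x = (u*(x*x)*u⁻¹*(x*x)⁻¹) * T x := by
      rw [mul_assoc (u*(x*x)*u⁻¹)]; exact eB
    have eZ : (u*(x*x)*u⁻¹*(x*x)⁻¹ - 1) * T x = 0 := by
      rw [sub_mul, one_mul, ← eB2, sub_self]
    have eO : u*(x*x)*u⁻¹*(x*x)⁻¹ = 1 := by
      have := mul_eq_zero.mp eZ
      rcases this with hh | hh
      · exact sub_eq_zero.mp hh
      · exact absurd hh hx
    have e7 : u*(x*x)*u⁻¹ = x*x := by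
      have e6 := congrArg (fun t => t * (x*x)) eO
      simp only [one_mul] at e6
      rw [mul_assoc (u*(x*x)*u⁻¹), inv_mul_cancel₀ hP0, mul_one] at e6
      exact e6
    have e8 := congrArg (fun t => t * u) e7
    rw [mul_assoc (u*(x*x)), inv_mul_cancel₀ hu, mul_one] at e8
    exact e8
  -- centrality helpers
  have centinv : ∀ c : D, (∀ u, c*u = u*c) → ∀ u : D, c⁻¹*u = u*c⁻¹ := by
    intro c hc u
    by_cases hc0 : c = 0
    · simp [hc0]
    have e := congrArg (fun t => c⁻¹ * t * c⁻¹) (hc u)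
    rw [← mul_assoc c⁻¹ c u, inv_mul_cancel₀ hc0, one_mul] at e
    rw [← mul_assoc c⁻¹ u c, mul_assoc (c⁻¹*u) c c⁻¹, mul_inv_cancel₀ hc0, mul_one] at e
    exact e.symm
  have centmul : ∀ c d : D, (∀u, c*u = u*c) → (∀u, d*u = u*d) →
      ∀ u : D, (c*d)*u = u*(c*d) := by
    intro c d hc hd u
    rw [mul_assoc, hd u, ← mul_assoc, hc u, mul_assoc]
  have fracl : ∀ a b : D, a ≠ 0 → b ≠ 0 → a⁻¹ + b⁻¹ = a⁻¹*((b+a)*b⁻¹) := by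
    intro a b ha hb
    rw [add_mul, mul_inv_cancel₀ hb, mul_add, mul_one, ← mul_assoc,
      inv_mul_cancel₀ ha, one_mul, add_comm]
  have mm : ∀ (r s c d : D), (∀u, s*u = u*s) → r*c*(s*d) = (r*s)*(c*d) := by
    intro r s c d hs
    rw [mul_assoc r c (s*d), ← mul_assoc c s d, ← hs c, mul_assoc s c d,
      ← mul_assoc r s (c*d)]
  have expand : ∀ (p q a b : D), (∀u, p*u = u*p) → (∀u, q*u = u*q) →
      (p*a + q*b)*(p*a + q*b)
        = p*p*(a*a) + (p*q)*(a*b + b*a) + q*q*(b*b) := by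
    intro p q a b hp hq
    rw [add_mul, mul_add, mul_add, mm p p a a hp, mm p q a b hq,
      mm q p b a hp, mm q q b b hq, ← hp q, mul_add (p*q)]
    abel
  -- now the contradiction
  intro z
  by_contra hz
  have hz0 : z ≠ 0 := fun hh => hz (hh ▸ hT0)
  have hA0 : z*z ≠ 0 := mul_ne_zero hz0 hz0
  have hAc : ∀ u : D, (z*z) * u = u * (z*z) := fun u => (hcent z hz u).symm
  have zinv : z⁻¹ = (z*z)⁻¹ * z := by
    apply inv_eq_of_mul_eq_one_right
    rw [← mul_assoc, ← centinv (z*z) hAc z, mul_assoc, inv_mul_cancel₀ hA0]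
  -- key step: kernel elements have central squares
  have hker2 : ∀ w : D, T w = 0 → ∀ u : D, u * (w*w) = (w*w) * u := by
    intro w hw u
    by_cases hw0 : w = 0
    · simp [hw0]
    have hTy : T (z + w) = T z := by rw [hadd, hw, add_zero]
    have hTy0 : T (z + w) ≠ 0 := by rw [hTy]; exact hz
    have hy0 : z + w ≠ 0 := fun hh => hTy0 (by rw [hh, hT0])
    have hB0 : (z+w)*(z+w) ≠ 0 := mul_ne_zero hy0 hy0
    have hBc : ∀ v : D, ((z+w)*(z+w)) * v = v * ((z+w)*(z+w)) :=
      fun v => (hcent (z+w) hTy0 v).symm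
    by_cases hc : T ((z*z) * w⁻¹) = 0
    · -- hard case: use the inversion identity
      have yinv : (z+w)⁻¹ = ((z+w)*(z+w))⁻¹ * (z+w) := by
        apply inv_eq_of_mul_eq_one_right
        rw [← mul_assoc, ← centinv ((z+w)*(z+w)) hBc (z+w), mul_assoc,
          inv_mul_cancel₀ hB0]
      have hs0 : z⁻¹ + (z+w)⁻¹ ≠ 0 := by
        intro hh
        have h2 : z⁻¹ = (z+w)⁻¹ := addcancel _ _ hh
        have h3 : z = z + w := inv_injective h2
        exact hw0 (left_eq_add.mp h3)
      have Ts1 : T (z⁻¹ + (z+w)⁻¹) = ((z*z)⁻¹ + ((z+w)*(z+w))⁻¹) * T z := by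
        rw [hadd, hTinv' z hz0, hTinv' (z+w) hy0, hTy, ← add_mul]
      have s_eq : z⁻¹ + (z+w)⁻¹ = z⁻¹*(w*(z+w)⁻¹) := by
        have e := fracl z (z+w) hz0 hy0
        have e2 : (z+w) + z = w := by rw [add_right_comm, addself, zero_add]
        rw [e2] at e
        exact e
      have sinv : (z⁻¹ + (z+w)⁻¹)⁻¹ = (z+w)*w⁻¹*z := by
        rw [s_eq, mul_inv_rev, mul_inv_rev, inv_inv, inv_inv]
      have Tsinv : T ((z+w)*w⁻¹*z) = T z := by
        have e : (z+w)*w⁻¹*z = z*w⁻¹*z + z := by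
          rw [add_mul z w w⁻¹, mul_inv_cancel₀ hw0, add_mul, one_mul]
        have e2 : T (z*w⁻¹*z) = 0 := by
          have e3 := hswap (z*w⁻¹) z
          rw [← mul_assoc z z w⁻¹] at e3
          rw [e3]
          exact hc
        rw [e, hadd, e2, zero_add]
      have Ts2 := hinv _ hs0
      rw [sinv, Tsinv, Ts1] at Ts2
      have eq1 : ((z*z)⁻¹ + ((z+w)*(z+w))⁻¹)
          = (z⁻¹ + (z+w)⁻¹)*(z⁻¹ + (z+w)⁻¹) := mul_right_cancel₀ hz Ts2
      have hpc : ∀ v : D, (z*z)⁻¹ * v = v * (z*z)⁻¹ := centinv _ hAc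
      have hqc : ∀ v : D, ((z+w)*(z+w))⁻¹ * v = v * ((z+w)*(z+w))⁻¹ := centinv _ hBc
      have srep : z⁻¹ + (z+w)⁻¹ = (z*z)⁻¹*z + ((z+w)*(z+w))⁻¹*(z+w) := by
        rw [zinv, yinv]
      rw [srep, expand _ _ _ _ hpc hqc] at eq1
      rw [show (z*z)⁻¹*(z*z)⁻¹*(z*z) = (z*z)⁻¹ from by
          rw [mul_assoc, inv_mul_cancel₀ hA0, mul_one],
        show ((z+w)*(z+w))⁻¹*((z+w)*(z+w))⁻¹*((z+w)*(z+w)) = ((z+w)*(z+w))⁻¹ from by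
          rw [mul_assoc, inv_mul_cancel₀ hB0, mul_one],
        show z*(z+w) + (z+w)*z = z*w + w*z from by
          have e6 : z*(z+w) + (z+w)*z = (z*z + z*z) + (z*w + w*z) := by noncomm_ring
          rw [e6, addself, zero_add]] at eq1
      -- eq1 : p + q = p + (p*q)*(z*w+w*z) + q
      have eM : (z*z)⁻¹*((z+w)*(z+w))⁻¹*(z*w + w*z) = 0 := by
        have e7 := add_right_cancel eq1.symm
        exact add_eq_left.mp e7
      have hzw0 : z*w + w*z = 0 := by
        rcases mul_eq_zero.mp eM with hh | hh
        · exact absurd hh (mul_ne_zero (inv_ne_zero hA0) (inv_ne_zero hB0))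
        · exact hh
      have eWW : w*w = z*z + (z+w)*(z+w) := by
        have e10 : (z+w)*(z+w) = z*z + ((z*w + w*z) + w*w) := by noncomm_ring
        rw [hzw0, zero_add] at e10
        rw [e10, ← add_assoc, addself, zero_add]
      rw [eWW, mul_add u (z*z) ((z+w)*(z+w)), add_mul (z*z) ((z+w)*(z+w)) u, hAc u, hBc u]
    · -- easy case: (z*z)*w⁻¹ has central square
      have hv0 : (z*z)*w⁻¹ ≠ 0 := mul_ne_zero hA0 (inv_ne_zero hw0)
      have hvc : ∀ v : D, ((z*z)*w⁻¹*((z*z)*w⁻¹)) * v = v * ((z*z)*w⁻¹*((z*z)*w⁻¹)) :=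
        fun v => (hcent _ hc v).symm
      have e : (z*z)*w⁻¹*((z*z)*w⁻¹) = ((z*z)*(z*z))*(w⁻¹*w⁻¹) :=
        mm _ _ _ _ hAc
      rw [e] at hvc
      have hAAc : ∀ v : D, ((z*z)*(z*z))*v = v*((z*z)*(z*z)) := centmul _ _ hAc hAc
      have hwwinv : ∀ v : D, (w⁻¹*w⁻¹)*v = v*(w⁻¹*w⁻¹) := by
        intro v
        have e2 : w⁻¹*w⁻¹ = ((z*z)*(z*z))⁻¹ * (((z*z)*(z*z))*(w⁻¹*w⁻¹)) := by
          rw [← mul_assoc, inv_mul_cancel₀ (mul_ne_zero hA0 hA0), one_mul]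
        rw [e2]
        exact centmul _ _ (centinv _ hAAc) hvc v
      have e4 : w*w = (w⁻¹*w⁻¹)⁻¹ := by rw [mul_inv_rev, inv_inv]
      rw [e4]
      exact (centinv _ hwwinv u).symm
  -- every square is central; contradiction with noncommutativity
  have hall : ∀ v u : D, u*(v*v) = (v*v)*u := by
    intro v u
    by_cases hv : T v = 0
    · exact hker2 v hv u
    · exact hcent v hv u
  have hcentcomm : ∀ a b u : D, u*(a*b + b*a) = (a*b + b*a)*u := by
    intro a b u
    have e0 : (a+b)*(a+b) + (a*a + b*b) = (a*b + b*a) + ((a*a + a*a) + (b*b + b*b)) := by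
      noncomm_ring
    rw [addself, addself, add_zero, add_zero] at e0
    rw [← e0, mul_add u ((a+b)*(a+b)) (a*a+b*b), add_mul ((a+b)*(a+b)) (a*a+b*b) u,
      hall (a+b) u, mul_add u (a*a) (b*b), add_mul (a*a) (b*b) u, hall a u, hall b u]
  obtain ⟨a, b, hab⟩ := hnc
  have hc0 : a*b + b*a ≠ 0 := fun hh => hab (addcancel _ _ hh)
  have h3 := hcentcomm a (a*b) b
  have e11 : a*(a*b) + (a*b)*a = a*(a*b + b*a) := by rw [mul_add, mul_assoc]
  rw [e11] at h3
  have h4 : (b*a)*(a*b + b*a) = (a*b)*(a*b + b*a) := by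
    calc (b*a)*(a*b+b*a) = b*(a*(a*b+b*a)) := by rw [mul_assoc]
    _ = (a*(a*b+b*a))*b := h3
    _ = a*((a*b+b*a)*b) := by rw [mul_assoc]
    _ = a*(b*(a*b+b*a)) := by rw [← hcentcomm a b b]
    _ = (a*b)*(a*b+b*a) := by rw [mul_assoc]
  exact hab (mul_right_cancel₀ hc0 h4).symm

theorem stmt_0 {D : Type*} [DivisionRing D] [CharP D 2]
    (hnc : ∃ a b : D, a * b ≠ b * a)
    (n : ℕ) (hn : n = 2)
    (f g : D → D)
    (hf : ∀ x y : D, f (x + y) = f x + f y)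
    (hg : ∀ x y : D, g (x + y) = g x + g y)
    (h : ∀ x : D, x ≠ 0 → f x = x ^ n * g x⁻¹) :
    f = g ∧ ∀ x : D, f x = x * f 1 := by
  subst hn
  have two0 : (2:D) = 0 := by exact_mod_cast CharP.cast_eq_zero D 2
  have addself : ∀ a : D, a + a = 0 := fun a => by rw [← two_mul, two0, zero_mul]
  have addcancel : ∀ a b : D, a + b = 0 → a = b := by
    intro a b hab
    calc a = a + 0 := (add_zero a).symm
    _ = a + (b + b) := by rw [addself]
    _ = (a + b) + b := (add_assoc a b b).symm
    _ = b := by rw [hab, zero_add]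
  have h' : ∀ x : D, x ≠ 0 → f x = x * x * g x⁻¹ := by
    intro x hx
    have := h x hx
    rwa [pow_two] at this
  have hfg1 : f 1 = g 1 := by
    have := h' 1 one_ne_zero
    rwa [one_mul, one_mul, inv_one] at this
  have hgf : ∀ x : D, x ≠ 0 → g x = x * x * f x⁻¹ := by
    intro x hx
    have e := h' x⁻¹ (inv_ne_zero hx)
    rw [inv_inv] at e
    have e2 := congrArg (fun t => x * x * t) e
    rw [show x*x*(x⁻¹*x⁻¹*g x) = g x from by
      rw [← mul_assoc (x*x), ← mul_assoc, mul_assoc x x x⁻¹, mul_inv_cancel₀ hx,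
        mul_one, mul_inv_cancel₀ hx, one_mul]] at e2
    exact e2.symm
  -- f = g
  have hFG : ∀ x : D, f x + g x = 0 := by
    apply keyT hnc (fun x => f x + g x)
    · intro x y
      rw [hf, hg]
      abel
    · rw [hfg1, addself]
    · intro x hx
      rw [mul_add, ← h' x hx, ← hgf x hx, add_comm]
  have hfg : f = g := funext fun x => addcancel _ _ (hFG x)
  refine ⟨hfg, ?_⟩
  have hff : ∀ x : D, x ≠ 0 → f x = x * x * f x⁻¹ := by
    intro x hx
    rw [h' x hx, hfg]
  have hF2 : ∀ x : D, f x + x * f 1 = 0 := by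
    apply keyT hnc (fun x => f x + x * f 1)
    · intro x y
      rw [hf, add_mul]
      abel
    · rw [one_mul, addself]
    · intro x hx
      rw [mul_add, ← hff x hx, ← mul_assoc, mul_assoc x x x⁻¹,
        mul_inv_cancel₀ hx, mul_one]
  exact fun x => addcancel _ _ (hF2 x)
end

section
/- Let D be a noncommutative division ring (of arbitrary characteristic), and let f, g : D → D be additive maps such that f(x) = g(x⁻¹) for all nonzero x ∈ D. Then f = 0 and g = 0. -/
/-!
Hua's identity `(a - aba)⁻¹ = a⁻¹ + (b⁻¹ - a)⁻¹` turns `f x = g x⁻¹` into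
`f (aba) = f a - g b`. Taking `a = 1` gives `f b + g b = f 1` for `b ∉ {0, 1}`; applying this to
`x`, `y` and `x + y`, all outside `{0, 1}`, forces `f 1 = 0`, hence `g = -f` and
`f (aba) = f a + f b`. Expanding `f (a (x + y) a)` in two ways then yields `f a = 0`. Only finitely
many values of `x` and `y` have to be avoided, and a noncommutative division ring is infinite by
Wedderburn's little theorem.
-/

theorem infinite_of_exists_mul_ne_mul {D : Type*} [DivisionRing D]
    (h : ∃ a b : D, a * b ≠ b * a) : Infinite D := by
  obtain ⟨a, b, hab⟩ := h
  exact not_finite_iff_infinite.mp fun _ => hab (mul_comm a b)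

theorem exists_ne_ne_of_infinite {G : Type*} [AddGroup G] [Infinite G] (c : G) :
    ∃ x y : G, x ≠ 0 ∧ x ≠ c ∧ y ≠ 0 ∧ y ≠ c ∧ x + y ≠ 0 ∧ x + y ≠ c := by
  classical
  obtain ⟨x, hx⟩ := Infinite.exists_notMem_finset ({0, c} : Finset G)
  obtain ⟨y, hy⟩ := Infinite.exists_notMem_finset ({0, c, -x, -x + c} : Finset G)
  simp only [Finset.mem_insert, Finset.mem_singleton, not_or] at hx hy
  obtain ⟨hy0, hyc, hyx, hyxc⟩ := hy
  refine ⟨x, y, hx.1, hx.2, hy0, hyc, fun h => hyx ?_, fun h => hyxc ?_⟩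
  · exact eq_neg_add_of_add_eq h |>.trans (add_zero _)
  · exact eq_neg_add_of_add_eq h

theorem sub_mul_mul_self_eq_mul_one_sub {R : Type*} [Ring R] (a b : R) :
    a - a * b * a = a * (1 - b * a) := by
  noncomm_ring

section DivisionRing

variable {D : Type*} [DivisionRing D]

theorem inv_sub_eq_inv_mul_one_sub {b : D} (hb : b ≠ 0) (a : D) : b⁻¹ - a = b⁻¹ * (1 - b * a) := by
  rw [mul_sub, mul_one, ← mul_assoc, inv_mul_cancel₀ hb, one_mul]

theorem inv_sub_mul_mul_self {a b : D} (ha : a ≠ 0) (hb : b ≠ 0) (hba : b * a ≠ 1) :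
    (a - a * b * a)⁻¹ = a⁻¹ + (b⁻¹ - a)⁻¹ := by
  have hu : 1 - b * a ≠ 0 := sub_ne_zero.mpr hba.symm
  rw [sub_mul_mul_self_eq_mul_one_sub, inv_sub_eq_inv_mul_one_sub hb, mul_inv_rev, mul_inv_rev,
    inv_inv]
  apply mul_left_cancel₀ hu
  rw [← mul_assoc, mul_inv_cancel₀ hu, one_mul, mul_add, ← mul_assoc, mul_inv_cancel₀ hu, one_mul,
    sub_mul, one_mul, mul_assoc, mul_inv_cancel₀ ha, mul_one, sub_add_cancel]

end DivisionRing

namespace AddMonoidHom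

variable {D : Type*} [DivisionRing D] {f g : D →+ D}

theorem apply_mul_mul_self_eq_sub (hfg : ∀ x, x ≠ 0 → f x = g x⁻¹) {a b : D} (ha : a ≠ 0)
    (hb : b ≠ 0) (hba : b * a ≠ 1) : f (a * b * a) = f a - g b := by
  have hu : 1 - b * a ≠ 0 := sub_ne_zero.mpr hba.symm
  have h1 : a - a * b * a ≠ 0 := by
    rw [sub_mul_mul_self_eq_mul_one_sub]; exact mul_ne_zero ha hu
  have h2 : b⁻¹ - a ≠ 0 := by
    rw [inv_sub_eq_inv_mul_one_sub hb]; exact mul_ne_zero (inv_ne_zero hb) hu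
  have : f a - f (a * b * a) = g b := by
    rw [← map_sub, hfg _ h1, inv_sub_mul_mul_self ha hb hba, map_add, ← hfg a ha, ← hfg _ h2,
      map_sub, hfg _ (inv_ne_zero hb), inv_inv, add_sub_cancel]
  rw [← this, sub_sub_cancel]

theorem apply_add_apply_eq_apply_one (hfg : ∀ x, x ≠ 0 → f x = g x⁻¹) {b : D} (hb0 : b ≠ 0)
    (hb1 : b ≠ 1) : f b + g b = f 1 := by
  have := apply_mul_mul_self_eq_sub hfg one_ne_zero hb0 (by rwa [mul_one])
  rw [one_mul, mul_one] at this
  rw [this, sub_add_cancel]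

variable [Infinite D]

theorem apply_one_eq_zero (hfg : ∀ x, x ≠ 0 → f x = g x⁻¹) : f 1 = 0 := by
  obtain ⟨x, y, hx0, hx1, hy0, hy1, hxy0, hxy1⟩ := exists_ne_ne_of_infinite (1 : D)
  have hx := apply_add_apply_eq_apply_one hfg hx0 hx1
  have hy := apply_add_apply_eq_apply_one hfg hy0 hy1
  have hxy := apply_add_apply_eq_apply_one hfg hxy0 hxy1
  rw [map_add, map_add, add_add_add_comm, hx, hy] at hxy
  exact add_eq_right.mp hxy

theorem eq_neg_of_apply_eq_apply_inv (hfg : ∀ x, x ≠ 0 → f x = g x⁻¹) : g = -f := by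
  ext b
  rw [neg_apply, eq_neg_iff_add_eq_zero, add_comm]
  obtain rfl | hb0 := eq_or_ne b 0
  · simp
  obtain rfl | hb1 := eq_or_ne b 1
  · have hg1 : g 1 = f 1 := by simpa using (hfg 1 one_ne_zero).symm
    rw [hg1, apply_one_eq_zero hfg, add_zero]
  rw [apply_add_apply_eq_apply_one hfg hb0 hb1, apply_one_eq_zero hfg]

theorem eq_zero_of_apply_eq_apply_inv (hfg : ∀ x, x ≠ 0 → f x = g x⁻¹) : f = 0 := by
  have hmul (a b : D) (ha : a ≠ 0) (hb : b ≠ 0) (hba : b ≠ a⁻¹) : f (a * b * a) = f a + f b := by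
    rw [apply_mul_mul_self_eq_sub hfg ha hb ((mul_eq_one_iff_eq_inv₀ ha).not.mpr hba),
      eq_neg_of_apply_eq_apply_inv hfg, neg_apply, sub_neg_eq_add]
  ext a
  obtain rfl | ha := eq_or_ne a 0
  · simp
  obtain ⟨x, y, hx0, hx, hy0, hy, hxy0, hxy⟩ := exists_ne_ne_of_infinite a⁻¹
  have := hmul a (x + y) ha hxy0 hxy
  rw [mul_add, add_mul, map_add, hmul a x ha hx0 hx, hmul a y ha hy0 hy, map_add,
    add_add_add_comm, add_left_inj, add_eq_left] at this
  rw [this, zero_apply]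

end AddMonoidHom

theorem stmt_2 {D : Type*} [DivisionRing D]
    (hnc : ∃ a b : D, a * b ≠ b * a)
    (f g : D → D)
    (hf : ∀ x y : D, f (x + y) = f x + f y)
    (hg : ∀ x y : D, g (x + y) = g x + g y)
    (h : ∀ x : D, x ≠ 0 → f x = g x⁻¹) :
    f = 0 ∧ g = 0 := by
  have := infinite_of_exists_mul_ne_mul hnc
  let F := AddMonoidHom.mk' f hf
  let G := AddMonoidHom.mk' g hg
  have hFG : ∀ x, x ≠ 0 → F x = G x⁻¹ := h
  have hF : F = 0 := AddMonoidHom.eq_zero_of_apply_eq_apply_inv hFG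
  have hG : G = -F := AddMonoidHom.eq_neg_of_apply_eq_apply_inv hFG
  rw [hF, neg_zero] at hG
  exact ⟨congrArg DFunLike.coe hF, congrArg DFunLike.coe hG⟩
end

section
/- Let D be a noncommutative division ring (of arbitrary characteristic), and let f, g : D → D be additive maps such that f(x) = x² · g(x⁻¹) for all nonzero x ∈ D. Then f = g and f(x) = x · f(1) for all x ∈ D. -/
/-!
From `(1 + x)⁻¹ = 1 - (1 + x⁻¹)⁻¹` one gets `f x + g x = 2 x f(1)`, so `F x := f x - x f(1)` is
additive, vanishes at `1` and obeys the inversion law `F(x⁻¹) = -x⁻¹x⁻¹F(x)` of a left derivation.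
Applying it to `((x + 1) x)⁻¹ = x⁻¹ - (x + 1)⁻¹` gives `F(x²) = 2xF(x)`, and from this
`[x, [x, y]] F(x) = 0`: when `2 ≠ 0` by expanding `F(x(xy + yx)x)` in two ways; when `2 = 0`,
`F(xy) = F(yx)` makes `F` invariant under conjugation, which against the inversion law forces `x²`
to be central as soon as `F(x) ≠ 0`. If `x` is not central but commutes with all `[x, y]`, then
`[x, z] = 1` for some `z`; this contradicts `[x, [x, z²]] = 2` when `2 ≠ 0`, and makes
`x = [x, zx]`, which `F` kills, when `2 = 0`. So `F` vanishes off the centre, hence everywhere as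
`D` is not commutative.
-/

theorem AddMonoidHom.eq_zero_of_forall_notMem_center {R M : Type*} [Ring R] [AddGroup M]
    (F : R →+ M) {a : R} (ha : a ∉ Subring.center R)
    (hF : ∀ x ∉ Subring.center R, F x = 0) : F = 0 := by
  ext x
  by_cases hx : x ∈ Subring.center R
  · have hxa : x + a ∉ Subring.center R := fun h => ha (by simpa using Subring.sub_mem _ h hx)
    rw [AddMonoidHom.zero_apply, ← add_sub_cancel_right x a, map_sub, hF _ hxa, hF a ha, sub_zero]
  · exact hF x hx

section DivisionRing

variable {D : Type*} [DivisionRing D]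

theorem exists_mul_sub_mul_eq_one_of_commute {x y : D} (hxy : x * y ≠ y * x)
    (hc : Commute x (x * y - y * x)) : ∃ z, x * z - z * x = 1 := by
  refine ⟨(x * y - y * x)⁻¹ * y, ?_⟩
  rw [← mul_assoc, hc.inv_right₀.eq, mul_assoc, mul_assoc, ← mul_sub,
    inv_mul_cancel₀ (sub_ne_zero.mpr hxy)]

theorem add_eq_two_mul_of_eq_sq_mul_map_inv (f g : D →+ D)
    (h : ∀ x : D, x ≠ 0 → f x = x ^ 2 * g x⁻¹) (x : D) : f x + g x = 2 * x * f 1 := by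
  have hg1 : g 1 = f 1 := by simpa using (h 1 one_ne_zero).symm
  rcases eq_or_ne x 0 with rfl | hx
  · simp
  rcases eq_or_ne (1 + x) 0 with hx1 | hx1
  · rw [eq_neg_of_add_eq_zero_right hx1, map_neg, map_neg, hg1]
    noncomm_ring
  have hu : 1 + x⁻¹ = x⁻¹ * (1 + x) := by rw [mul_add, mul_one, inv_mul_cancel₀ hx, add_comm]
  have hu0 : 1 + x⁻¹ ≠ 0 := by rw [hu]; exact mul_ne_zero (inv_ne_zero hx) hx1
  have hinv : (1 + x)⁻¹ = 1 - (1 + x⁻¹)⁻¹ := by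
    rw [eq_sub_iff_add_eq, hu, mul_inv_rev, inv_inv, ← mul_one_add, inv_mul_cancel₀ hx1]
  have hgu : (1 + x) ^ 2 * g (1 + x⁻¹)⁻¹ = x ^ 2 * f 1 + g x := by
    have hcomm : Commute x (1 + x⁻¹) :=
      (Commute.one_right x).add_right (Commute.refl x).inv_right₀
    rw [← mul_inv_cancel_left₀ hx (1 + x), ← hu, hcomm.mul_pow, mul_assoc, ← h _ hu0, map_add,
      h x⁻¹ (inv_ne_zero hx), inv_inv, mul_add, ← mul_assoc, inv_pow,
      mul_inv_cancel₀ (pow_ne_zero 2 hx), one_mul]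
  have key : f 1 + f x = (1 + x) ^ 2 * f 1 - (x ^ 2 * f 1 + g x) := by
    rw [← map_add, h _ hx1, hinv, map_sub, hg1, mul_sub, hgu]
  rw [eq_sub_of_add_eq' key]
  noncomm_ring

theorem map_inv_sub_mul_map_one_of_eq_sq_mul_map_inv (f g : D →+ D)
    (h : ∀ x : D, x ≠ 0 → f x = x ^ 2 * g x⁻¹) (x : D) :
    f x⁻¹ - x⁻¹ * f 1 = -(x⁻¹ * x⁻¹ * (f x - x * f 1)) := by
  rcases eq_or_ne x 0 with rfl | hx
  · simp
  rw [h x⁻¹ (inv_ne_zero hx), inv_inv,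
    eq_sub_of_add_eq' (add_eq_two_mul_of_eq_sq_mul_map_inv f g h x)]
  simp only [pow_two, two_mul, add_mul, mul_sub, mul_add, mul_assoc, inv_mul_cancel_left₀ hx]
  abel

theorem map_mul_self_of_map_inv {F : D →+ D} (h1 : F 1 = 0)
    (hinv : ∀ x : D, F x⁻¹ = -(x⁻¹ * x⁻¹ * F x)) (x : D) : F (x * x) = 2 * (x * F x) := by
  rcases eq_or_ne x 0 with rfl | hx
  · simp
  rcases eq_or_ne (x + 1) 0 with hx1 | hx1
  · rw [eq_neg_of_add_eq_zero_left hx1]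
    simp [h1]
  set s := (x + 1) * x with hs_def
  have hs : s ≠ 0 := mul_ne_zero hx1 hx
  have hFs : F s = F (x * x) + F x := by rw [← map_add, hs_def]; congr 1; noncomm_ring
  have hsinv : F s⁻¹ = -(x⁻¹ * x⁻¹ * F x) + (x + 1)⁻¹ * (x + 1)⁻¹ * F x := by
    have : s⁻¹ = x⁻¹ - (x + 1)⁻¹ := by
      rw [inv_sub_inv' hx hx1, add_sub_cancel_left, mul_one, hs_def, mul_inv_rev]
    rw [this, map_sub, hinv, hinv, map_add, h1, add_zero, sub_neg_eq_add]
  have e : s⁻¹ * s⁻¹ * F s = x⁻¹ * x⁻¹ * F x - (x + 1)⁻¹ * (x + 1)⁻¹ * F x := by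
    rw [← neg_inj, ← hinv, hsinv]
    abel
  have key : F s = ((x + 1) * (x + 1) - x * x) * F x := by
    have hss : s * s = (x + 1) * (x + 1) * (x * x) := by rw [hs_def]; noncomm_ring
    have hss' : s * s = x * x * ((x + 1) * (x + 1)) := by rw [hs_def]; noncomm_ring
    calc F s = s * s * (s⁻¹ * s⁻¹ * F s) := by simp only [mul_assoc, mul_inv_cancel_left₀ hs]
      _ = s * s * (x⁻¹ * x⁻¹ * F x) - s * s * ((x + 1)⁻¹ * (x + 1)⁻¹ * F x) := by rw [e, mul_sub]
      _ = ((x + 1) * (x + 1) - x * x) * F x := by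
        nth_rw 1 [hss]
        rw [hss', sub_mul]
        simp only [mul_assoc, mul_inv_cancel_left₀ hx, mul_inv_cancel_left₀ hx1]
  rw [hFs] at key
  rw [eq_sub_of_add_eq key]
  noncomm_ring

theorem map_mul_add_mul_of_map_inv {F : D →+ D} (h1 : F 1 = 0)
    (hinv : ∀ x : D, F x⁻¹ = -(x⁻¹ * x⁻¹ * F x)) (x y : D) :
    F (x * y + y * x) = 2 * (x * F y + y * F x) := by
  have e := map_mul_self_of_map_inv h1 hinv (x + y)
  rw [show (x + y) * (x + y) = x * x + y * y + (x * y + y * x) by noncomm_ring,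
    map_add F (x * x + y * y), map_add F (x * x),
    map_mul_self_of_map_inv h1 hinv, map_mul_self_of_map_inv h1 hinv, map_add F x] at e
  rw [eq_sub_of_add_eq' e]
  noncomm_ring

theorem map_mul_comm_of_two_eq_zero {F : D →+ D} (h2 : (2 : D) = 0) (h1 : F 1 = 0)
    (hinv : ∀ x : D, F x⁻¹ = -(x⁻¹ * x⁻¹ * F x)) (x y : D) : F (x * y) = F (y * x) := by
  have e := map_mul_add_mul_of_map_inv h1 hinv x y
  rw [h2, zero_mul, map_add] at e
  rw [eq_neg_of_add_eq_zero_left e, neg_eq_of_add_eq_zero_left (by rw [← two_mul, h2, zero_mul])]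

theorem commute_mul_self_of_two_eq_zero {F : D →+ D} (h2 : (2 : D) = 0) (h1 : F 1 = 0)
    (hinv : ∀ x : D, F x⁻¹ = -(x⁻¹ * x⁻¹ * F x)) {x : D} (hx : F x ≠ 0) (u : D) :
    Commute (x * x) u := by
  rcases eq_or_ne u 0 with rfl | hu
  · exact Commute.zero_right _
  have hconj : ∀ y, F (u * y * u⁻¹) = F y := fun y => by
    rw [map_mul_comm_of_two_eq_zero h2 h1 hinv, ← mul_assoc, inv_mul_cancel₀ hu, one_mul]
  have e := hinv (u * x * u⁻¹)
  rw [hconj, mul_inv_rev, mul_inv_rev, inv_inv, ← mul_assoc, hconj] at e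
  have hc : x⁻¹ * x⁻¹ = u * (x⁻¹ * x⁻¹) * u⁻¹ := by
    refine mul_right_cancel₀ hx (neg_injective ?_)
    rw [← hinv, e]
    simp only [mul_assoc, inv_mul_cancel_left₀ hu]
  rw [← Commute.inv_left_iff₀, mul_inv_rev]
  exact (eq_mul_inv_iff_mul_eq₀ hu).mp hc

theorem map_mul_mul_self_of_map_inv {F : D →+ D} (h2 : (2 : D) ≠ 0) (h1 : F 1 = 0)
    (hinv : ∀ x : D, F x⁻¹ = -(x⁻¹ * x⁻¹ * F x)) (x y : D) :
    F (x * y * x) = x * x * F y + 3 * (x * y * F x) - y * x * F x := by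
  have e := map_mul_add_mul_of_map_inv h1 hinv x (x * y + y * x)
  rw [show x * (x * y + y * x) + (x * y + y * x) * x
      = x * x * y + y * (x * x) + (x * y * x + x * y * x) by noncomm_ring, map_add,
    map_add F (x * y * x), map_mul_add_mul_of_map_inv h1 hinv (x * x) y,
    map_mul_add_mul_of_map_inv h1 hinv x y, map_mul_self_of_map_inv h1 hinv] at e
  refine mul_left_cancel₀ h2 ?_
  rw [two_mul, eq_sub_of_add_eq' e]
  noncomm_ring

theorem double_commutator_mul_map_eq_zero_of_map_inv {F : D →+ D} (h1 : F 1 = 0)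
    (hinv : ∀ x : D, F x⁻¹ = -(x⁻¹ * x⁻¹ * F x)) (x y : D) :
    (x * x * y - 2 * (x * y * x) + y * (x * x)) * F x = 0 := by
  rcases eq_or_ne (2 : D) 0 with h2 | h2
  · rcases eq_or_ne (F x) 0 with hx | hx
    · rw [hx, mul_zero]
    rw [h2, zero_mul, sub_zero, ← (commute_mul_self_of_two_eq_zero h2 h1 hinv hx y).eq, ← two_mul,
      h2, zero_mul, zero_mul]
  have e := map_mul_mul_self_of_map_inv h2 h1 hinv x (x * y + y * x)
  rw [show x * (x * y + y * x) * x = x * (x * y * x) + x * y * x * x by noncomm_ring,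
    map_mul_add_mul_of_map_inv h1 hinv x (x * y * x), map_mul_mul_self_of_map_inv h2 h1 hinv,
    map_mul_add_mul_of_map_inv h1 hinv x y] at e
  rw [← sub_eq_zero_of_eq e]
  noncomm_ring

theorem map_eq_zero_of_notMem_center_of_map_inv {F : D →+ D} (h1 : F 1 = 0)
    (hinv : ∀ x : D, F x⁻¹ = -(x⁻¹ * x⁻¹ * F x)) {x : D} (hx : x ∉ Subring.center D) :
    F x = 0 := by
  by_contra hFx
  have hcomm : ∀ y, Commute x (x * y - y * x) := fun y => by
    have e := (mul_eq_zero.mp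
      (double_commutator_mul_map_eq_zero_of_map_inv h1 hinv x y)).resolve_right hFx
    rw [Commute, SemiconjBy, ← sub_eq_zero, ← e]
    noncomm_ring
  obtain ⟨y, hy⟩ : ∃ y, x * y ≠ y * x := by
    simpa [Subring.mem_center_iff, eq_comm] using hx
  obtain ⟨z, hz⟩ := exists_mul_sub_mul_eq_one_of_commute hy (hcomm y)
  rcases eq_or_ne (2 : D) 0 with h2 | h2
  · apply hFx
    rw [show x = x * (z * x) - z * x * x by rw [← mul_assoc, ← sub_mul, hz, one_mul], map_sub,
      map_mul_comm_of_two_eq_zero h2 h1 hinv, sub_self]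
  · apply h2
    have hzz : x * (z * z) - z * z * x = z + z := by
      rw [show x * (z * z) - z * z * x = (x * z - z * x) * z + z * (x * z - z * x) by noncomm_ring,
        hz, one_mul, mul_one]
    calc (2 : D) = x * (z + z) - (z + z) * x := by
          rw [show x * (z + z) - (z + z) * x = 2 * (x * z - z * x) by noncomm_ring, hz, mul_one]
      _ = 0 := by rw [← hzz, sub_eq_zero]; exact (hcomm (z * z)).eq

theorem eq_zero_of_map_inv {F : D →+ D} (hD : ∃ a b : D, a * b ≠ b * a) (h1 : F 1 = 0)
    (hinv : ∀ x : D, F x⁻¹ = -(x⁻¹ * x⁻¹ * F x)) : F = 0 := by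
  obtain ⟨a, b, hab⟩ := hD
  refine F.eq_zero_of_forall_notMem_center (a := b) ?_ fun x hx =>
    map_eq_zero_of_notMem_center_of_map_inv h1 hinv hx
  rw [Subring.mem_center_iff]
  exact fun h => hab (h a)

end DivisionRing

theorem stmt_3 {D : Type*} [DivisionRing D]
    (hnc : ∃ a b : D, a * b ≠ b * a)
    (f g : D → D)
    (hf : ∀ x y : D, f (x + y) = f x + f y)
    (hg : ∀ x y : D, g (x + y) = g x + g y)
    (h : ∀ x : D, x ≠ 0 → f x = x ^ 2 * g x⁻¹) :
    f = g ∧ ∀ x : D, f x = x * f 1 := by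
  have hfg := add_eq_two_mul_of_eq_sq_mul_map_inv (.mk' f hf) (.mk' g hg) h
  have hF : AddMonoidHom.mk' f hf - AddMonoidHom.mulRight (f 1) = 0 :=
    eq_zero_of_map_inv hnc (by simp) fun x => by
      simpa using map_inv_sub_mul_map_one_of_eq_sq_mul_map_inv (.mk' f hf) (.mk' g hg) h x
  have hfx : ∀ x, f x = x * f 1 := fun x => by
    simpa [sub_eq_zero] using DFunLike.congr_fun hF x
  refine ⟨funext fun x => ?_, hfx⟩
  have hgx := hfg x
  rw [AddMonoidHom.mk'_apply, AddMonoidHom.mk'_apply, hfx, two_mul, add_mul, ← hfx] at hgx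
  exact (add_left_cancel hgx).symm
end

section
/- Let D be a noncommutative division ring of characteristic 2, let n be a positive integer, and let f : D → D be an additive map such that f(x) = xⁿ · f(x⁻¹) for all nonzero x ∈ D. Then for all a, b ∈ D with ab = ba, one has f(a²b) = ((1 + ab)ⁿ + (ab)ⁿ + 1) · f(a) + aⁿ · f(b). -/
theorem stmt_6 {D : Type*} [DivisionRing D] [CharP D 2]
    (hnc : ∃ a b : D, a * b ≠ b * a)
    (n : ℕ) (hn : 0 < n)
    (f : D → D)
    (hf : ∀ x y : D, f (x + y) = f x + f y)
    (h : ∀ x : D, x ≠ 0 → f x = x ^ n * f x⁻¹) :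
    ∀ a b : D, a * b = b * a →
      f (a ^ 2 * b) = ((1 + a * b) ^ n + (a * b) ^ n + 1) * f a + a ^ n * f b := by
  have f0 : f 0 = 0 := by
    have h0 := hf 0 0
    rw [add_zero] at h0
    exact left_eq_add.mp h0
  have chr : ∀ x : D, x + x = 0 := CharTwo.add_self_eq_zero
  intro a b hab
  rcases eq_or_ne a 0 with rfl | ha
  · simp [zero_pow hn.ne', f0, chr (1 : D)]
  rcases eq_or_ne b 0 with rfl | hb
  · simp [zero_pow hn.ne', f0, chr (1 : D)]
  set t : D := 1 + a * b with htdef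
  have hC : Commute a b := hab
  have hCt : Commute a t := (Commute.one_right a).add_right ((Commute.refl a).mul_right hC)
  rcases eq_or_ne t 0 with ht0 | ht
  · -- case a*b = 1
    have hab1 : a * b = 1 := by
      have h' : (1 : D) + a * b = 0 := ht0
      rw [add_eq_zero_iff_neg_eq, CharTwo.neg_eq] at h'
      exact h'.symm
    have hbinv : b = a⁻¹ := (inv_eq_of_mul_eq_one_right hab1).symm
    have h1 : a ^ 2 * b = a := by
      rw [hbinv, pow_two, mul_assoc, mul_inv_cancel₀ ha, mul_one]
    rw [h1, ht0, hab1, zero_pow hn.ne', one_pow, zero_add, chr (1:D), zero_mul,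
      zero_add, hbinv, ← h a ha]
  -- main case
  have hcne : b⁻¹ + a ≠ 0 := by
    intro hc0
    apply ht
    have hbc : t = b * (b⁻¹ + a) := by
      rw [mul_add, mul_inv_cancel₀ hb, htdef, ← hab]
    rw [hbc, hc0, mul_zero]
  set c : D := b⁻¹ + a with hcdef
  have hbc : t = b * c := by rw [hcdef, mul_add, mul_inv_cancel₀ hb, htdef, ← hab]
  have hcb : c = b⁻¹ * t := by rw [hbc, ← mul_assoc, inv_mul_cancel₀ hb, one_mul]
  have hat : a * t ≠ 0 := mul_ne_zero ha ht
  have hCbt : Commute b t := (Commute.one_right b).add_right ((hC.symm).mul_right (Commute.refl b))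
  have hCbit : Commute b⁻¹ t := hCbt.inv_left₀
  have hinv : (a * t)⁻¹ = a⁻¹ + c⁻¹ := by
    apply inv_eq_of_mul_eq_one_right
    have e1 : a * t * a⁻¹ = t := by rw [hCt.eq, mul_assoc, mul_inv_cancel₀ ha, mul_one]
    have e2 : a * t * c⁻¹ = a * b := by
      rw [hbc, ← mul_assoc, mul_assoc (a*b) c c⁻¹, mul_inv_cancel₀ hcne, mul_one]
    rw [mul_add, e1, e2, htdef, add_assoc, chr (a*b), add_zero]
  have hbn : b ^ n * c ^ n = t ^ n := by
    rw [hcb, hCbit.mul_pow, ← mul_assoc, inv_pow,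
      mul_inv_cancel₀ (pow_ne_zero n hb), one_mul]
  have hfa : a ^ n * f a⁻¹ = f a := (h a ha).symm
  have hfb : b ^ n * f b⁻¹ = f b := (h b hb).symm
  have hfc : c ^ n * f c⁻¹ = f c := (h c hcne).symm
  have ht2 : t ^ n * f c⁻¹ = b ^ n * f c := by rw [← hbn, mul_assoc, hfc]
  have hfceq : f c = f b⁻¹ + f a := by rw [hcdef, hf]
  have swap1 : a ^ n * (t ^ n * f a⁻¹) = t ^ n * f a := by
    rw [← mul_assoc, (hCt.pow_pow n n).eq, mul_assoc, hfa]
  have key : f (a * t) = t ^ n * f a + (a ^ n * f b + a ^ n * b ^ n * f a) := by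
    calc f (a * t) = (a * t) ^ n * f (a * t)⁻¹ := h _ hat
      _ = (a ^ n * t ^ n) * (f a⁻¹ + f c⁻¹) := by rw [hCt.mul_pow, hinv, hf]
      _ = a ^ n * (t ^ n * f a⁻¹) + a ^ n * (t ^ n * f c⁻¹) := by
          rw [mul_add, mul_assoc, mul_assoc]
      _ = t ^ n * f a + a ^ n * (b ^ n * (f b⁻¹ + f a)) := by rw [swap1, ht2, hfceq]
      _ = t ^ n * f a + (a ^ n * f b + a ^ n * b ^ n * f a) := by
          rw [mul_add, mul_add, hfb, ← mul_assoc]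
  have hsplit : a ^ 2 * b = a + a * t := by
    rw [htdef, mul_add, mul_one, ← add_assoc, chr a, zero_add, pow_two, mul_assoc]
  rw [hsplit, hf, key, hC.mul_pow]
  rw [add_mul, add_mul, one_mul]
  abel
end

section
/- Let D be a noncommutative division ring of characteristic 2, let n ≥ 2 be an integer, and let f : D → D be an additive map such that f(x) = xⁿ · f(x⁻¹) for all nonzero x ∈ D. If f(a²) = 0 for all a ∈ D, then f = 0. -/
/-!
Since `f` kills squares, `f (u * v) = f (v * u)`; in particular `f` is invariant under
conjugation, and comparing `f y = yⁿ f y⁻¹` with the same identity for a conjugate of `y` shows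
that `yⁿ` is central whenever `f y ≠ 0`. Write `n = 2ᵉ r` with `r` odd.

If `r > 1`, the functional equation at `y`, `1 + y` and `y (1 + y)`, together with
`y⁻¹ + (1 + y)⁻¹ = (y (1 + y))⁻¹`, gives `yⁿ + (1 + y)ⁿ = 1`. So `y` is algebraic over `𝔽₂`,
hence a square, and `f y = 0`.

If `n = 2ᵉ`, a non-central `y` with `f y ≠ 0` has a power `Y = y ^ 2 ^ k` that is not central
while `Y²` is. In characteristic 2 this yields `w` with `Y w + w Y = 1`, and then
`f y = f (y Y w) + f (y w Y) = 0` because `y` and `Y` commute.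
-/

section Cyclic

variable {R M : Type*} [Ring R] [AddCommGroup M]

theorem map_mul_eq_neg_map_mul_swap (f : R →+ M) (hsq : ∀ a, f (a ^ 2) = 0) (u v : R) :
    f (u * v) = -f (v * u) := by
  have hexp : (u + v) ^ 2 = u ^ 2 + (u * v + v * u) + v ^ 2 := by noncomm_ring
  have h := hsq (u + v)
  rw [hexp, map_add, map_add, map_add, hsq, hsq, zero_add, add_zero] at h
  exact eq_neg_of_add_eq_zero_left h

theorem map_mul_comm_of_map_sq_eq_zero (f : R →+ M) (hsq : ∀ a, f (a ^ 2) = 0) (u v : R) :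
    f (u * v) = f (v * u) := by
  have h : f (v * u) = -f (v * u) := by
    simpa using map_mul_eq_neg_map_mul_swap f hsq (v * u) 1
  rw [map_mul_eq_neg_map_mul_swap f hsq, ← h]

theorem map_eq_zero_of_commute_of_mul_add_mul_eq_one (f : R →+ M) (hsq : ∀ a, f (a ^ 2) = 0)
    {y Y w : R} (hyY : Commute y Y) (hw : Y * w + w * Y = 1) : f y = 0 := by
  have h : f (y * w * Y) = -f (y * (Y * w)) := by
    rw [map_mul_eq_neg_map_mul_swap f hsq, ← mul_assoc, ← hyY.eq, mul_assoc]
  calc f y = f (y * (Y * w)) + f (y * w * Y) := by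
        rw [← map_add, mul_assoc y w Y, ← mul_add, hw, mul_one]
    _ = 0 := by rw [h, add_neg_cancel]

theorem AddMonoidHom.exists_map_ne_zero_notMem_center (f : R →+ M) (hf : f ≠ 0)
    (hR : ∃ a b : R, a * b ≠ b * a) : ∃ y, f y ≠ 0 ∧ y ∉ Subring.center R := by
  obtain ⟨y, hy⟩ := DFunLike.ne_iff.mp hf
  obtain ⟨a, b, hab⟩ := hR
  have ha : a ∉ Subring.center R := fun h => hab (Subring.mem_center_iff.mp h b).symm
  by_cases hyc : y ∈ Subring.center R
  · by_cases hfa : f a = 0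
    · refine ⟨y + a, by simpa [hfa] using hy, fun h => ha ?_⟩
      simpa using Subring.sub_mem _ h hyc
    · exact ⟨a, hfa, ha⟩
  · exact ⟨y, hy, hyc⟩

end Cyclic

open Polynomial in
theorem isAlgebraic_of_pow_add_one_add_pow_eq_one {K A : Type*} [CommRing K] [Ring A]
    [Algebra K A] {r : ℕ} (hr : 2 ≤ r) (hrK : (r : K) ≠ 0) {w : A}
    (hw : w ^ r + (1 + w) ^ r = 1) : IsAlgebraic K w := by
  refine ⟨X ^ r + (1 + X) ^ r - 1, fun h0 => hrK ?_, by simp [hw]⟩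
  have h := congrArg (coeff · (r - 1)) h0
  have hchoose : r.choose (r - 1) = r := by
    rw [Nat.choose_symm (by omega), Nat.choose_one_right]
  simpa [coeff_X_pow, coeff_one_add_X_pow, coeff_one, hchoose, show r - 1 ≠ r by omega,
    show r - 1 ≠ 0 by omega] using h

theorem IsAlgebraic.exists_pow_char_eq {p : ℕ} [Fact p.Prime] {A : Type*} [Ring A]
    [NoZeroDivisors A] [CharP A p] [Algebra (ZMod p) A] {x : A}
    (hx : IsAlgebraic (ZMod p) x) : ∃ z, z ^ p = x := by
  let S := Algebra.adjoin (ZMod p) {x}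
  have : Module.Finite (ZMod p) S := Algebra.finite_adjoin_simple_of_isIntegral hx.isIntegral
  have : Finite S := Module.finite_of_finite (ZMod p)
  have hmaps : Set.MapsTo (· ^ p) (S : Set A) S := fun z hz => Subalgebra.pow_mem _ hz p
  have hinj : Set.InjOn (· ^ p) (S : Set A) := by
    intro z hz w hw hzw
    have hc : Commute z w := Algebra.commute_of_mem_adjoin_singleton_of_commute hw
      (Algebra.commute_of_mem_adjoin_self hz).symm
    have h0 : (z - w) ^ p = 0 := by
      rw [sub_pow_char_of_commute p hc]
      exact sub_eq_zero.mpr hzw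
    exact sub_eq_zero.mp ((pow_eq_zero_iff (Fact.out : p.Prime).ne_zero).mp h0)
  -- Frobenius is injective on the finite commutative set `𝔽_p[x]`, hence surjective
  obtain ⟨z, -, hz⟩ := (((Set.toFinite _).injOn_iff_bijOn_of_mapsTo hmaps).mp hinj).surjOn
    (Algebra.self_mem_adjoin_singleton (ZMod p) x)
  exact ⟨z, hz⟩

section DivisionRing

variable {D : Type*} [DivisionRing D]

theorem inv_add_inv_eq_inv_mul_iff {a b : D} (ha : a ≠ 0) (hb : b ≠ 0) :
    a⁻¹ + b⁻¹ = (a * b)⁻¹ ↔ a + b = 1 := by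
  have hl : b * (a⁻¹ + b⁻¹) * a = a + b := by
    simp [mul_add, add_mul, ha, hb, add_comm]
  have hr : b * (a * b)⁻¹ * a = 1 := by
    simp [ha, hb]
  constructor
  · intro h
    rw [← hl, h, hr]
  · intro h
    exact mul_left_cancel₀ hb (mul_right_cancel₀ ha (hl.trans (h.trans hr.symm)))

theorem pow_mem_center_of_map_ne_zero (f : D →+ D) {n : ℕ} (hsq : ∀ a, f (a ^ 2) = 0)
    (hinv : ∀ x, x ≠ 0 → f x = x ^ n * f x⁻¹) {y : D} (hy : f y ≠ 0) :
    y ^ n ∈ Subring.center D := by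
  rw [Subring.mem_center_iff]
  intro a
  rcases eq_or_ne a 0 with rfl | ha
  · simp
  have hconj : ∀ z, f (a⁻¹ * z * a) = f z := fun z => by
    rw [map_mul_comm_of_map_sq_eq_zero f hsq, ← mul_assoc, mul_inv_cancel₀ ha, one_mul]
  have hy0 : y ≠ 0 := by
    rintro rfl
    exact hy (map_zero f)
  have hfy : f y⁻¹ ≠ 0 := fun h0 => hy (by rw [hinv y hy0, h0, mul_zero])
  have ht : a⁻¹ * y * a ≠ 0 := by simp [ha, hy0]
  have hconj_inv : f (a⁻¹ * y * a)⁻¹ = f y⁻¹ := by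
    rw [show (a⁻¹ * y * a)⁻¹ = a⁻¹ * y⁻¹ * a by simp [mul_assoc], hconj]
  -- `f y = y ^ n * f y⁻¹` and, by conjugation invariance, `f y = (a⁻¹ y a) ^ n * f y⁻¹`
  have hpow : y ^ n = a⁻¹ * y ^ n * a := by
    rw [← GroupWithZero.conj_pow₀ ha]
    refine mul_right_cancel₀ hfy ?_
    rw [← hinv y hy0, ← hconj_inv, ← hinv _ ht, hconj]
  calc a * y ^ n = a * (a⁻¹ * y ^ n * a) := by rw [← hpow]
    _ = y ^ n * a := by simp [← mul_assoc, ha]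

section CharTwo

variable [CharP D 2]

theorem CharTwo.exists_mul_add_mul_eq_one {Y : D} (hY : Y ∉ Subring.center D)
    (hY2 : Y ^ 2 ∈ Subring.center D) : ∃ w, Y * w + w * Y = 1 := by
  rw [Subring.mem_center_iff] at hY hY2
  obtain ⟨x, hx⟩ := not_forall.mp hY
  have hc0 : Y * x + x * Y ≠ 0 := by
    rw [Ne, CharTwo.add_eq_zero]
    exact fun h => hx h.symm
  have hYc : Commute Y (Y * x + x * Y) :=
    calc Y * (Y * x + x * Y) = Y ^ 2 * x + Y * x * Y := by noncomm_ring
      _ = x * Y ^ 2 + Y * x * Y := by rw [hY2 x]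
      _ = (Y * x + x * Y) * Y := by noncomm_ring
  refine ⟨x * (Y * x + x * Y)⁻¹, ?_⟩
  rw [mul_assoc x, ← hYc.inv_right₀.eq, ← mul_assoc, ← mul_assoc, ← add_mul,
    mul_inv_cancel₀ hc0]

theorem mem_center_of_pow_two_pow_mem_center {M : Type*} [AddCommGroup M] (f : D →+ M)
    (hsq : ∀ a, f (a ^ 2) = 0) {y : D} (hy : f y ≠ 0) (k : ℕ)
    (hk : y ^ 2 ^ k ∈ Subring.center D) : y ∈ Subring.center D := by
  induction k with
  | zero => simpa using hk
  | succ k ih =>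
    refine ih (by_contra fun hY => ?_)
    obtain ⟨w, hw⟩ := CharTwo.exists_mul_add_mul_eq_one hY (by rwa [← pow_mul, ← pow_succ])
    exact hy (map_eq_zero_of_commute_of_mul_add_mul_eq_one f hsq (Commute.self_pow y _) hw)

theorem pow_add_one_add_pow_eq_one (f : D →+ D) {n : ℕ} (hsq : ∀ a, f (a ^ 2) = 0)
    (hinv : ∀ x, x ≠ 0 → f x = x ^ n * f x⁻¹) {y : D} (hy : f y ≠ 0) :
    y ^ n + (1 + y) ^ n = 1 := by
  have hf1 : f 1 = 0 := by simpa using hsq 1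
  have hy0 : y ≠ 0 := by
    rintro rfl
    exact hy (map_zero f)
  have hy1 : 1 + y ≠ 0 := by
    rw [Ne, CharTwo.add_eq_zero]
    rintro rfl
    exact hy hf1
  have hinv' : ∀ x, x ≠ 0 → f x⁻¹ = x⁻¹ ^ n * f x := fun x hx => by
    simpa using hinv x⁻¹ (inv_ne_zero hx)
  have hfrac : y⁻¹ + (1 + y)⁻¹ = (y * (1 + y))⁻¹ :=
    (inv_add_inv_eq_inv_mul_iff hy0 hy1).mpr <| by
      rw [add_left_comm, CharTwo.add_self_eq_zero, add_zero]
  have hf1y : f (1 + y) = f y := by rw [map_add, hf1, zero_add]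
  have hfy1y : f (y * (1 + y)) = f y := by rw [mul_add, mul_one, ← sq, map_add, hsq, add_zero]
  have key : (y⁻¹ ^ n + (1 + y)⁻¹ ^ n) * f y = (y * (1 + y))⁻¹ ^ n * f y :=
    calc (y⁻¹ ^ n + (1 + y)⁻¹ ^ n) * f y = y⁻¹ ^ n * f y + (1 + y)⁻¹ ^ n * f (1 + y) := by
          rw [add_mul, hf1y]
      _ = f (y⁻¹ + (1 + y)⁻¹) := by rw [map_add f y⁻¹, hinv' y hy0, hinv' _ hy1]
      _ = (y * (1 + y))⁻¹ ^ n * f y := by rw [hfrac, hinv' _ (mul_ne_zero hy0 hy1), hfy1y]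
  have hcomm : Commute y (1 + y) := (Commute.one_right y).add_right (Commute.refl y)
  have h := mul_right_cancel₀ hy key
  rw [inv_pow, inv_pow, inv_pow, hcomm.mul_pow] at h
  exact (inv_add_inv_eq_inv_mul_iff (pow_ne_zero n hy0) (pow_ne_zero n hy1)).mp h

theorem map_eq_zero_of_two_pow (hD : ∃ a b : D, a * b ≠ b * a) (f : D →+ D) {e : ℕ}
    (hsq : ∀ a, f (a ^ 2) = 0) (hinv : ∀ x, x ≠ 0 → f x = x ^ 2 ^ e * f x⁻¹) : f = 0 := by
  by_contra hf
  obtain ⟨y, hy, hyc⟩ := f.exists_map_ne_zero_notMem_center hf hD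
  exact hyc (mem_center_of_pow_two_pow_mem_center f hsq hy e
    (pow_mem_center_of_map_ne_zero f hsq hinv hy))

theorem map_eq_zero_of_ne_two_pow (f : D →+ D) {e r : ℕ} (hr : Odd r) (hr1 : r ≠ 1)
    (hsq : ∀ a, f (a ^ 2) = 0) (hinv : ∀ x, x ≠ 0 → f x = x ^ (2 ^ e * r) * f x⁻¹) :
    f = 0 := by
  let _ : Algebra (ZMod 2) D := ZMod.algebra D 2
  ext y
  by_contra hy
  have hsum := pow_add_one_add_pow_eq_one f hsq hinv hy
  rw [pow_mul, pow_mul, add_pow_char_pow_of_commute 2 e (Commute.one_left y), one_pow] at hsum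
  have hw : IsAlgebraic (ZMod 2) (y ^ 2 ^ e) :=
    isAlgebraic_of_pow_add_one_add_pow_eq_one (by have := hr.pos; omega)
      (by rwa [Ne, ZMod.natCast_eq_zero_iff_even, Nat.not_even_iff_odd]) hsum
  obtain ⟨z, rfl⟩ := (hw.of_pow (by positivity)).exists_pow_char_eq
  exact hy (hsq z)

end CharTwo

end DivisionRing

theorem stmt_7 {D : Type*} [DivisionRing D] [CharP D 2]
    (hnc : ∃ a b : D, a * b ≠ b * a)
    (n : ℕ) (hn : 2 ≤ n)
    (f : D → D)
    (hf : ∀ x y : D, f (x + y) = f x + f y)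
    (h : ∀ x : D, x ≠ 0 → f x = x ^ n * f x⁻¹)
    (hsq : ∀ a : D, f (a ^ 2) = 0) :
    f = 0 := by
  obtain ⟨e, r, hr, rfl⟩ := Nat.exists_eq_two_pow_mul_odd (by omega : n ≠ 0)
  suffices AddMonoidHom.mk' f hf = 0 from congrArg DFunLike.coe this
  rcases eq_or_ne r 1 with rfl | hr1
  · rw [mul_one] at h
    exact map_eq_zero_of_two_pow hnc _ hsq h
  · exact map_eq_zero_of_ne_two_pow _ hr hr1 hsq h
end

section
/- Let D be a noncommutative division ring of characteristic 2, and let f, g : D → D be additive maps such that f(x) = x² · g(x⁻¹) for all nonzero x ∈ D. Then f = g and f(x) = x · f(1) for all x ∈ D. -/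
section Stmt11Aux
set_option linter.unusedSectionVars false

variable {D : Type*} [DivisionRing D] [CharP D 2]

private def IsCent {E : Type*} [Mul E] (w : E) : Prop := ∀ z : E, w * z = z * w

private lemma addself (a : D) : a + a = 0 := by
  have h2 : (2 : D) = 0 := by exact_mod_cast CharP.cast_eq_zero D 2
  rw [← two_mul, h2, zero_mul]

private lemma eqz {a b : D} (hab : a + b = 0) : a = b := by
  have h1 : a + b + b = b := by rw [hab, zero_add]
  rwa [add_assoc, addself, add_zero] at h1

private lemma shiftr {a b c : D} (hab : a + b = c) : a = c + b := by
  rw [← hab, add_assoc, addself, add_zero]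

private lemma cent_add {a b : D} (ha : IsCent a) (hb : IsCent b) : IsCent (a + b) := by
  intro z; rw [add_mul, mul_add, ha z, hb z]

private lemma cent_one : IsCent (1 : D) := by intro z; rw [one_mul, mul_one]

private lemma cent_mul {a b : D} (ha : IsCent a) (hb : IsCent b) : IsCent (a * b) := by
  intro z
  calc a * b * z = a * (b * z) := by rw [mul_assoc]
    _ = a * (z * b) := by rw [hb z]
    _ = a * z * b := by rw [mul_assoc]
    _ = z * a * b := by rw [ha z]
    _ = z * (a * b) := by rw [mul_assoc]

private lemma cent_inv {a : D} (ha : IsCent a) : IsCent a⁻¹ := by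
  by_cases h0 : a = 0
  · intro z; rw [h0, inv_zero, zero_mul, mul_zero]
  · intro z
    calc a⁻¹ * z = a⁻¹ * z * (a * a⁻¹) := by rw [mul_inv_cancel₀ h0, mul_one]
      _ = a⁻¹ * (z * a) * a⁻¹ := by noncomm_ring
      _ = a⁻¹ * (a * z) * a⁻¹ := by rw [← ha z]
      _ = (a⁻¹ * a) * (z * a⁻¹) := by noncomm_ring
      _ = z * a⁻¹ := by rw [inv_mul_cancel₀ h0, one_mul]

private lemma sum_sq (x y : D) : x * y + y * x = (x + y) * (x + y) + (x * x + y * y) := by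
  have e2 : (x + y) * (x + y) + (x * x + y * y)
      = (x * y + y * x) + ((x * x + x * x) + (y * y + y * y)) := by noncomm_ring
  rw [e2, addself, addself, add_zero, add_zero]

private lemma exists_sq_noncent (hnc : ∃ a b : D, a * b ≠ b * a) :
    ∃ p : D, ¬ IsCent (p * p) := by
  by_contra hall
  push_neg at hall
  obtain ⟨a, b, hab⟩ := hnc
  have hc0 : a * b + b * a ≠ 0 := fun h0 => hab (eqz h0)
  have hcc : IsCent (a * b + b * a) := by
    rw [sum_sq]
    exact cent_add (hall (a + b)) (cent_add (hall a) (hall b))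
  have hk : IsCent (a * (a * b) + (a * b) * a) := by
    rw [sum_sq]
    exact cent_add (hall (a + a * b)) (cent_add (hall a) (hall (a * b)))
  have hac : a * (a * b) + (a * b) * a = a * (a * b + b * a) := by noncomm_ring
  rw [hac] at hk
  have h1 := hk b
  have h2 := hcc b
  have e1 : a * (a * b + b * a) * b = a * (b * (a * b + b * a)) := by
    rw [mul_assoc, h2]
  have e3 : (a * b) * (a * b + b * a) = (b * a) * (a * b + b * a) := by
    rw [mul_assoc, mul_assoc, ← e1, h1]
  exact hab (mul_right_cancel₀ hc0 e3)

private lemma keyq {u q : D} (hu : IsCent (u * u))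
    (H : ∀ x : D, ¬ IsCent (x * x) → IsCent ((u + x) * (u + x)))
    (hq : ¬ IsCent (q * q)) : u * q + q * u = 1 + q * q := by
  have hq0 : q ≠ 0 := by rintro rfl; exact hq (by intro z; simp)
  have hqi : ¬ IsCent (q⁻¹ * q⁻¹) := by
    intro hc
    apply hq
    have h1 : IsCent ((q⁻¹ * q⁻¹)⁻¹) := cent_inv hc
    rwa [mul_inv_rev, inv_inv] at h1
  have hηc : IsCent (q * q + (u * q + q * u)) := by
    have e : (u + q) * (u + q) + u * u = q * q + (u * q + q * u) := by
      have e2 : (u + q) * (u + q) + u * u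
          = (q * q + (u * q + q * u)) + (u * u + u * u) := by noncomm_ring
      rw [e2, addself, add_zero]
    rw [← e]
    exact cent_add (H q hq) hu
  have hθc : IsCent (q⁻¹ * q⁻¹ + (u * q⁻¹ + q⁻¹ * u)) := by
    have e : (u + q⁻¹) * (u + q⁻¹) + u * u = q⁻¹ * q⁻¹ + (u * q⁻¹ + q⁻¹ * u) := by
      have e2 : (u + q⁻¹) * (u + q⁻¹) + u * u
          = (q⁻¹ * q⁻¹ + (u * q⁻¹ + q⁻¹ * u)) + (u * u + u * u) := by noncomm_ring
      rw [e2, addself, add_zero]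
    rw [← e]
    exact cent_add (H q⁻¹ hqi) hu
  have hsand : q * (q⁻¹ * q⁻¹ + (u * q⁻¹ + q⁻¹ * u)) * q = 1 + (u * q + q * u) := by
    have expand : q * (q⁻¹ * q⁻¹ + (u * q⁻¹ + q⁻¹ * u)) * q
        = q * (q⁻¹ * q⁻¹) * q + (q * (u * q⁻¹) * q + q * (q⁻¹ * u) * q) := by noncomm_ring
    have t1 : q * (q⁻¹ * q⁻¹) * q = (q * q⁻¹) * (q⁻¹ * q) := by noncomm_ring
    have t2 : q * (u * q⁻¹) * q = (q * u) * (q⁻¹ * q) := by noncomm_ring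
    have t3 : q * (q⁻¹ * u) * q = (q * q⁻¹) * (u * q) := by noncomm_ring
    rw [expand, t1, t2, t3, mul_inv_cancel₀ hq0, inv_mul_cancel₀ hq0]
    simp only [one_mul, mul_one]
    rw [add_comm (q * u) (u * q)]
  have hθq : (q⁻¹ * q⁻¹ + (u * q⁻¹ + q⁻¹ * u)) * q
      = q * (q⁻¹ * q⁻¹ + (u * q⁻¹ + q⁻¹ * u)) := hθc q
  have hsand2 : q * (q⁻¹ * q⁻¹ + (u * q⁻¹ + q⁻¹ * u)) * q
      = (q⁻¹ * q⁻¹ + (u * q⁻¹ + q⁻¹ * u)) * (q * q) := by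
    rw [← hθq, mul_assoc]
  have hkey : (1 + (q⁻¹ * q⁻¹ + (u * q⁻¹ + q⁻¹ * u))) * (q * q)
      = 1 + (q * q + (u * q + q * u)) := by
    have d : (1 + (q⁻¹ * q⁻¹ + (u * q⁻¹ + q⁻¹ * u))) * (q * q)
        = q * q + (q⁻¹ * q⁻¹ + (u * q⁻¹ + q⁻¹ * u)) * (q * q) := by noncomm_ring
    rw [d, ← hsand2, hsand]
    abel
  by_cases hθ1 : 1 + (q⁻¹ * q⁻¹ + (u * q⁻¹ + q⁻¹ * u)) = 0
  · have h0 : (0 : D) = 1 + (q * q + (u * q + q * u)) := by rw [← hkey, hθ1, zero_mul]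
    have hη1 : (1 : D) = q * q + (u * q + q * u) := eqz h0.symm
    rw [hη1]
    have e : (q * q + (u * q + q * u)) + q * q
        = (u * q + q * u) + (q * q + q * q) := by abel
    rw [e, addself, add_zero]
  · exfalso
    apply hq
    have hqq : q * q = (1 + (q⁻¹ * q⁻¹ + (u * q⁻¹ + q⁻¹ * u)))⁻¹
        * (1 + (q * q + (u * q + q * u))) := by
      rw [← hkey, ← mul_assoc, inv_mul_cancel₀ hθ1, one_mul]
    rw [hqq]
    exact cent_mul (cent_inv (cent_add cent_one hθc)) (cent_add cent_one hηc)

private lemma lemX {u p : D} (hp : ¬ IsCent (p * p)) (hu : IsCent (u * u))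
    (H : ∀ x : D, ¬ IsCent (x * x) → IsCent ((u + x) * (u + x))) : False := by
  have h1 := keyq hu H hp
  have hp1 : ¬ IsCent ((p + 1) * (p + 1)) := by
    intro hc
    apply hp
    have e : (p + 1) * (p + 1) = p * p + 1 := by
      have e2 : (p + 1) * (p + 1) = (p * p + 1) + (p + p) := by noncomm_ring
      rw [e2, addself, add_zero]
    have hc' : IsCent (p * p + 1) := by rw [← e]; exact hc
    have h3 : (p * p + 1) + 1 = p * p := by rw [add_assoc, addself, add_zero]
    have h4 : IsCent ((p * p + 1) + 1) := cent_add hc' cent_one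
    rwa [h3] at h4
  have h2 := keyq hu H hp1
  have l : u * (p + 1) + (p + 1) * u = (u * p + p * u) + (u + u) := by noncomm_ring
  rw [l, addself, add_zero, h1] at h2
  have r : 1 + (p + 1) * (p + 1) = p * p + ((p + p) + (1 + 1)) := by noncomm_ring
  rw [r, addself, addself, add_zero, add_zero] at h2
  have h3 : (1 : D) + p * p = 0 + p * p := by rw [h2, zero_add]
  exact one_ne_zero (add_right_cancel h3)

private theorem main_aux (hnc : ∃ a b : D, a * b ≠ b * a) (F : D → D)
    (hFadd : ∀ x y : D, F (x + y) = F x + F y)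
    (hFrel : ∀ x : D, x ≠ 0 → F x = x ^ 2 * F x⁻¹)
    (hFsq : ∀ x : D, F (x * x) = 0) :
    ∀ v : D, F v = 0 := by
  have Fc : ∀ a b : D, F (a * b) = F (b * a) := by
    intro a b
    apply eqz
    calc F (a * b) + F (b * a) = F (a * b + b * a) := (hFadd _ _).symm
      _ = F ((a + b) * (a + b) + (a * a + b * b)) := by rw [sum_sq]
      _ = F ((a + b) * (a + b)) + (F (a * a) + F (b * b)) := by rw [hFadd, hFadd]
      _ = 0 := by rw [hFsq, hFsq, hFsq, add_zero, add_zero]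
  have Fnc : ∀ t : D, t ≠ 0 → ¬ IsCent (t * t) → F t = 0 := by
    intro t ht hcent
    have hex : ∃ z : D, ¬ (t * t * z = z * (t * t)) := by
      by_contra hno
      push_neg at hno
      exact hcent fun z => hno z
    obtain ⟨z, hz⟩ := hex
    have hz0 : z ≠ 0 := by rintro rfl; exact hz (by simp)
    have conj1 : F (z * t * z⁻¹) = F t := by
      have e := Fc z (t * z⁻¹)
      rw [inv_mul_cancel_right₀ hz0, ← mul_assoc] at e
      exact e
    have conj2 : F (z * t⁻¹ * z⁻¹) = F t⁻¹ := by
      have e := Fc z (t⁻¹ * z⁻¹)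
      rw [inv_mul_cancel_right₀ hz0, ← mul_assoc] at e
      exact e
    have hzt : z * t * z⁻¹ ≠ 0 := mul_ne_zero (mul_ne_zero hz0 ht) (inv_ne_zero hz0)
    have e := hFrel _ hzt
    have einv : (z * t * z⁻¹)⁻¹ = z * t⁻¹ * z⁻¹ := by
      rw [mul_inv_rev, mul_inv_rev, inv_inv, ← mul_assoc]
    have esq : (z * t * z⁻¹) ^ 2 = z * (t * t) * z⁻¹ := by
      rw [pow_two]
      have e1 : z * t * z⁻¹ * (z * t * z⁻¹) = z * t * (z⁻¹ * z) * (t * z⁻¹) := by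
        noncomm_ring
      rw [e1, inv_mul_cancel₀ hz0, mul_one]
      noncomm_ring
    rw [einv, esq, conj1, conj2] at e
    have e0 := hFrel t ht
    rw [pow_two] at e0
    by_cases hF0 : F t⁻¹ = 0
    · rw [e0, hF0, mul_zero]
    · exfalso
      apply hz
      have h2 : t * t = z * (t * t) * z⁻¹ := mul_right_cancel₀ hF0 (e0.symm.trans e)
      calc t * t * z = z * (t * t) * z⁻¹ * z := by rw [← h2]
        _ = z * (t * t) := by rw [inv_mul_cancel_right₀ hz0]
  obtain ⟨p, hp⟩ := exists_sq_noncent hnc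
  have main : ∀ w : D, ¬ IsCent (w * w) → F w = 0 := by
    intro w hw
    have hw0 : w ≠ 0 := by rintro rfl; exact hw (by intro z; simp)
    exact Fnc w hw0 hw
  intro v
  by_cases hv : IsCent (v * v)
  · by_cases hall : ∀ x : D, ¬ IsCent (x * x) → IsCent ((v + x) * (v + x))
    · exact (lemX hp hv hall).elim
    · push_neg at hall
      obtain ⟨x, hx1, hx2⟩ := hall
      have hvx : v + x + x = v := by rw [add_assoc, addself, add_zero]
      calc F v = F (v + x + x) := by rw [hvx]
        _ = F (v + x) + F x := by rw [hFadd]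
        _ = 0 := by rw [main _ hx2, main _ hx1, add_zero]
  · exact main v hv

end Stmt11Aux

theorem stmt_11 {D : Type*} [DivisionRing D] [CharP D 2]
    (hnc : ∃ a b : D, a * b ≠ b * a)
    (f g : D → D)
    (hf : ∀ x y : D, f (x + y) = f x + f y)
    (hg : ∀ x y : D, g (x + y) = g x + g y)
    (h : ∀ x : D, x ≠ 0 → f x = x ^ 2 * g x⁻¹) :
    f = g ∧ ∀ x : D, f x = x * f 1 := by
  have f0 : f 0 = 0 := by
    have e := hf 0 0
    rw [add_zero] at e
    rw [addself] at e
    exact e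
  have g0 : g 0 = 0 := by
    have e := hg 0 0
    rw [add_zero] at e
    rw [addself] at e
    exact e
  have fg1 : f 1 = g 1 := by
    have e := h 1 one_ne_zero
    rwa [inv_one, one_pow, one_mul] at e
  have key2 : ∀ x : D, x ≠ 0 → g x⁻¹ = (x ^ 2)⁻¹ * f x := by
    intro x hx
    rw [h x hx, ← mul_assoc, inv_mul_cancel₀ (pow_ne_zero 2 hx), one_mul]
  -- Step: f (x^2) = x^2 * f 1
  have hsqpow : ∀ x : D, f (x ^ 2) = x ^ 2 * f 1 := by
    intro x
    by_cases hx : x = 0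
    · rw [hx]
      norm_num [f0]
    by_cases hx1 : x = 1
    · rw [hx1]; simp
    have hy : x + 1 ≠ 0 := by
      intro hc
      apply hx1
      have e : x + 1 + 1 = 0 + 1 := by rw [hc]
      rwa [add_assoc, addself, add_zero, zero_add] at e
    have hcxy : Commute x (x + 1) := (Commute.refl x).add_right (Commute.one_right x)
    have hu : x * (x + 1) ≠ 0 := mul_ne_zero hx hy
    have hinv : (x * (x + 1))⁻¹ = x⁻¹ + (x + 1)⁻¹ := by
      refine inv_eq_of_mul_eq_one_right ?_
      rw [mul_add]
      nth_rewrite 1 [hcxy.eq]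
      rw [mul_inv_cancel_right₀ hx, mul_inv_cancel_right₀ hy]
      have e : (x + 1) + x = 1 + (x + x) := by abel
      rw [e, addself, add_zero]
    have e3 := h _ hu
    rw [hinv, hg, key2 x hx, key2 _ hy] at e3
    have c1 : (x * (x + 1)) ^ 2 * ((x ^ 2)⁻¹ * f x) = (x + 1) ^ 2 * f x := by
      rw [← mul_assoc, hcxy.mul_pow, (hcxy.pow_pow 2 2).eq,
        mul_inv_cancel_right₀ (pow_ne_zero 2 hx)]
    have c2 : (x * (x + 1)) ^ 2 * (((x + 1) ^ 2)⁻¹ * f (x + 1)) = x ^ 2 * f (x + 1) := by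
      rw [← mul_assoc, hcxy.mul_pow, mul_inv_cancel_right₀ (pow_ne_zero 2 hy)]
    rw [mul_add ((x * (x + 1)) ^ 2) ((x ^ 2)⁻¹ * f x) (((x + 1) ^ 2)⁻¹ * f (x + 1)), c1, c2, hf x 1] at e3
    have eu : x * (x + 1) = x ^ 2 + x := by noncomm_ring
    rw [eu, hf (x ^ 2) x] at e3
    have hy2 : (x + 1) ^ 2 = x ^ 2 + 1 := by
      have e : (x + 1) ^ 2 = (x ^ 2 + 1) + (x + x) := by noncomm_ring
      rw [e, addself, add_zero]
    rw [hy2] at e3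
    have final : (x ^ 2 + 1) * f x + x ^ 2 * (f x + f 1)
        = x ^ 2 * f 1 + f x := by
      have e : (x ^ 2 + 1) * f x + x ^ 2 * (f x + f 1)
          = (x ^ 2 * f 1 + f x) + (x ^ 2 * f x + x ^ 2 * f x) := by noncomm_ring
      rw [e, addself, add_zero]
    rw [final] at e3
    exact add_right_cancel e3
  -- Step: g t = t^2 * f t⁻¹
  have key3 : ∀ t : D, t ≠ 0 → g t = t ^ 2 * f t⁻¹ := by
    intro t ht
    have e := h t⁻¹ (inv_ne_zero ht)
    rw [inv_inv] at e
    rw [e, ← mul_assoc, ← ((Commute.refl t).inv_right₀).mul_pow,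
      mul_inv_cancel₀ ht, one_pow, one_mul]
  -- Step: f = g
  have hfg : f = g := by
    funext s
    by_cases hs0 : s = 0
    · rw [hs0, f0, g0]
    by_cases hs1 : s = 1
    · rw [hs1, fg1]
    have hy : (1 : D) + s ≠ 0 := by
      intro hc
      apply hs1
      have e : 1 + s + s = 0 + s := by rw [hc]
      rw [add_assoc, addself, add_zero, zero_add] at e
      exact e.symm
    have hcsy : Commute s (1 + s) := (Commute.one_right s).add_right (Commute.refl s)
    have h1 : (1 + s) * (1 + s)⁻¹ = 1 := mul_inv_cancel₀ hy
    rw [add_mul, one_mul] at h1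
    have hyi : (1 + s)⁻¹ = 1 + s * (1 + s)⁻¹ := shiftr h1
    have ht0 : s * (1 + s)⁻¹ ≠ 0 := mul_ne_zero hs0 (inv_ne_zero hy)
    have hti : (s * (1 + s)⁻¹)⁻¹ = s⁻¹ + 1 := by
      rw [mul_inv_rev, inv_inv, add_mul, one_mul, mul_inv_cancel₀ hs0]
    have e := h _ hy
    rw [hyi, hg, key3 _ ht0, hti, hf s⁻¹ 1, h s⁻¹ (inv_ne_zero hs0), inv_inv] at e
    have cc : Commute s (1 + s)⁻¹ := hcsy.inv_right₀
    have s1 : (1 + s) ^ 2 * ((s * (1 + s)⁻¹) ^ 2 * ((s⁻¹) ^ 2 * g s + f 1))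
        = g s + s ^ 2 * f 1 := by
      rw [cc.mul_pow, inv_pow, ← mul_assoc, ← mul_assoc,
        ← (hcsy.pow_pow 2 2).eq, mul_inv_cancel_right₀ (pow_ne_zero 2 hy),
        mul_add, ← mul_assoc, inv_pow, mul_inv_cancel₀ (pow_ne_zero 2 hs0), one_mul]
    have s2 : (1 + s) ^ 2 * g 1 = f 1 + s ^ 2 * f 1 := by
      rw [← fg1]
      have e2 : (1 + s) ^ 2 = 1 + s ^ 2 := by
        have e3 : (1 + s) ^ 2 = (1 + s ^ 2) + (s + s) := by noncomm_ring
        rw [e3, addself, add_zero]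
      rw [e2, add_mul, one_mul]
    rw [mul_add ((1 + s) ^ 2) (g 1) ((s * (1 + s)⁻¹) ^ 2 * ((s⁻¹) ^ 2 * g s + f 1)), s1, s2, hf 1 s] at e
    have fin : (f 1 + s ^ 2 * f 1) + (g s + s ^ 2 * f 1) = f 1 + g s := by
      have e4 : (f 1 + s ^ 2 * f 1) + (g s + s ^ 2 * f 1)
          = (f 1 + g s) + (s ^ 2 * f 1 + s ^ 2 * f 1) := by noncomm_ring
      rw [e4, addself, add_zero]
    rw [fin] at e
    exact add_left_cancel e
  subst hfg
  refine ⟨rfl, ?_⟩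
  have hFadd : ∀ x y : D, (f (x + y) + (x + y) * f 1) = (f x + x * f 1) + (f y + y * f 1) := by
    intro x y
    rw [hf x y, add_mul]
    abel
  have hFrel : ∀ x : D, x ≠ 0 → (f x + x * f 1) = x ^ 2 * (f x⁻¹ + x⁻¹ * f 1) := by
    intro x hx
    rw [mul_add, ← h x hx]
    have e : x ^ 2 * (x⁻¹ * f 1) = x * f 1 := by
      rw [pow_two, mul_assoc, ← mul_assoc x x⁻¹, mul_inv_cancel₀ hx, one_mul]
    rw [e]
  have hFsq : ∀ x : D, (f (x * x) + (x * x) * f 1) = 0 := by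
    intro x
    rw [← pow_two, hsqpow x]
    exact addself _
  have hF0 : ∀ v : D, f v + v * f 1 = 0 :=
    main_aux hnc (fun z => f z + z * f 1) hFadd hFrel hFsq
  intro x
  exact eqz (hF0 x)
end

section
/- Let D be a division ring of characteristic different from 2, and let f, g : D → D be additive maps such that f(x) = x · g(x⁻¹) for all nonzero x ∈ D. Then f = 0 and g = 0. -/
theorem stmt_14 {D : Type*} [DivisionRing D]
    (hchar : ringChar D ≠ 2)
    (f g : D → D)
    (hf : ∀ x y : D, f (x + y) = f x + f y)
    (hg : ∀ x y : D, g (x + y) = g x + g y)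
    (h : ∀ x : D, x ≠ 0 → f x = x * g x⁻¹) :
    f = 0 ∧ g = 0 := by
  have two_ne : (2 : D) ≠ 0 := Ring.two_ne_zero hchar
  have f0 : f 0 = 0 := by
    have h1 := hf 0 0
    simp only [add_zero] at h1
    have h2 : f 0 + f 0 = f 0 + 0 := by rw [add_zero, ← h1]
    exact add_left_cancel h2
  have g0 : g 0 = 0 := by
    have h1 := hg 0 0
    simp only [add_zero] at h1
    have h2 : g 0 + g 0 = g 0 + 0 := by rw [add_zero, ← h1]
    exact add_left_cancel h2
  have fneg : ∀ x, f (-x) = - f x := by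
    intro x
    have h1 := hf x (-x)
    rw [add_neg_cancel, f0] at h1
    exact (neg_eq_of_add_eq_zero_right h1.symm).symm
  have gneg : ∀ x, g (-x) = - g x := by
    intro x
    have h1 := hg x (-x)
    rw [add_neg_cancel, g0] at h1
    exact (neg_eq_of_add_eq_zero_right h1.symm).symm
  have gsub : ∀ x y, g (x - y) = g x - g y := by
    intro x y
    rw [sub_eq_add_neg, hg, gneg, sub_eq_add_neg]
  -- Step 1 : f 1 = 0
  have hg1 : f 1 = g 1 := by simpa using h 1 one_ne_zero
  have f1 : f 1 = 0 := by
    have hm := h (-1) (by norm_num)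
    rw [fneg, inv_neg, inv_one, gneg, hg1] at hm
    -- hm : -(g 1) = -1 * -(g 1)
    have hgg : -(g 1) = g 1 := by rw [hm, neg_one_mul, neg_neg]
    have h2 : (2 : D) * g 1 = 0 := by
      rw [two_mul]
      nth_rewrite 1 [← hgg]
      exact neg_add_cancel _
    rw [hg1]
    exact (mul_eq_zero.mp h2).resolve_left two_ne
  -- Step 2 : f (u * u) = 0 for all u
  have fsq : ∀ u : D, f (u * u) = 0 := by
    intro u
    by_cases hu : u = 0
    · rw [hu, mul_zero, f0]
    by_cases hv : u + 1 = 0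
    · have hu1 : u = -1 := eq_neg_of_add_eq_zero_left hv
      rw [hu1]; simpa using f1
    set v : D := u + 1 with hvdef
    set w : D := u * v with hwdef
    have hw : w ≠ 0 := mul_ne_zero hu hv
    have hwinv1 : w⁻¹ = v⁻¹ * u⁻¹ := by rw [hwdef, mul_inv_rev]
    have hw2 : w = v * u := by rw [hwdef, hvdef]; noncomm_ring
    have hwinv2 : w⁻¹ = u⁻¹ * v⁻¹ := by rw [hw2, mul_inv_rev]
    have hvinv : v⁻¹ = u⁻¹ - w⁻¹ := by
      have c1 : u⁻¹ - w⁻¹ = u⁻¹ * (1 - v⁻¹) := by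
        rw [hwinv2, mul_sub, mul_one]
      have c2 : (1 : D) - v⁻¹ = u * v⁻¹ := by
        have : (1 : D) - v⁻¹ = (v - 1) * v⁻¹ := by
          rw [sub_mul, mul_inv_cancel₀ hv, one_mul]
        rw [this]
        congr 1
        rw [hvdef, add_sub_cancel_right]
      rw [c1, c2, ← mul_assoc, inv_mul_cancel₀ hu, one_mul]
    -- key computations
    have hfv : f v = f u := by
      rw [hvdef, hf, f1, add_zero]
    have hfw : f w = f (u * u) + f u := by
      have : w = u * u + u := by rw [hwdef, hvdef, mul_add, mul_one]
      rw [this, hf]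
    have hgw : g w⁻¹ = w⁻¹ * f w := by
      have := h w hw
      rw [this, ← mul_assoc, inv_mul_cancel₀ hw, one_mul]
    have hfu := h u hu
    have main : f v = v * g u⁻¹ - v * g w⁻¹ := by
      rw [h v hv, hvinv, gsub, mul_sub]
    have e1 : v * g u⁻¹ = f u + g u⁻¹ := by
      rw [hvdef, add_mul, one_mul, ← hfu]
    have e2 : v * g w⁻¹ = u⁻¹ * f w := by
      rw [hgw, ← mul_assoc, hwinv1, ← mul_assoc, mul_inv_cancel₀ hv, one_mul]
    rw [hfv, e1, e2] at main
    -- main : f u = f u + g u⁻¹ - u⁻¹ * f w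
    rw [add_sub_assoc] at main
    have main' : f u + 0 = f u + (g u⁻¹ - u⁻¹ * f w) := by rw [add_zero]; exact main
    have e3 : g u⁻¹ = u⁻¹ * f w :=
      sub_eq_zero.mp (add_left_cancel main').symm
    have e4 : u * g u⁻¹ = f w := by
      rw [e3, ← mul_assoc, mul_inv_cancel₀ hu, one_mul]
    have e5 : 0 + f u = f (u * u) + f u := by
      rw [zero_add]
      nth_rewrite 1 [hfu]
      rw [e4, hfw]
    exact (add_right_cancel e5).symm
  -- Step 3 : f = 0
  have fzero : ∀ x : D, f x = 0 := by
    intro x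
    have h1 := fsq (x + 1)
    have hexp : (x + 1) * (x + 1) = x * x + (x + (x + 1)) := by noncomm_ring
    rw [hexp, hf, hf, hf, fsq x, f1, zero_add] at h1
    -- h1 : f x + (f x + 0) = 0
    have h2 : (2 : D) * f x = 0 := by rw [two_mul]; simpa using h1
    exact (mul_eq_zero.mp h2).resolve_left two_ne
  refine ⟨funext fzero, funext fun x => ?_⟩
  by_cases hx : x = 0
  · simpa [hx] using g0
  · have h1 := h x⁻¹ (inv_ne_zero hx)
    rw [fzero, inv_inv] at h1
    have := (mul_eq_zero.mp h1.symm).resolve_left (inv_ne_zero hx)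
    simpa using this
end

section
/- Let D be a noncommutative division ring of characteristic 2, and let f : D → D be an additive map such that f(x) = f(x⁻¹) for all nonzero x ∈ D. Then f(x⁴ + x) = 0 for all x ∈ D. -/
theorem stmt_15 {D : Type*} [DivisionRing D] [CharP D 2]
    (hnc : ∃ a b : D, a * b ≠ b * a)
    (f : D → D)
    (hf : ∀ x y : D, f (x + y) = f x + f y)
    (h : ∀ x : D, x ≠ 0 → f x = f x⁻¹) :
    ∀ x : D, f (x ^ 4 + x) = 0 := by
  have h2 : (2 : D) = 0 := by exact_mod_cast CharP.cast_eq_zero D 2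
  have hdbl : ∀ a : D, a + a = 0 := fun a => by rw [← two_mul, h2, zero_mul]
  have hf0 : f 0 = 0 := by
    have := hf 0 0
    rw [add_zero] at this
    exact (left_eq_add.mp this)
  -- key lemma
  have key : ∀ x : D, x ≠ 0 → (1 : D) + x ≠ 0 → f (x + x * x) = f 1 := by
    intro x hx hx1
    have e1 : x * x⁻¹ = 1 := mul_inv_cancel₀ hx
    have e2 : (1 + x) * (1 + x)⁻¹ = 1 := mul_inv_cancel₀ hx1
    have hfac : x + x * x = x * (1 + x) := by noncomm_ring
    have hune : x + x * x ≠ 0 := by rw [hfac]; exact mul_ne_zero hx hx1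
    have hu : (x + x * x) * (x⁻¹ + (1 + x)⁻¹) = 1 := by
      have expand : (x + x * x) * (x⁻¹ + (1 + x)⁻¹)
          = x * x⁻¹ + x * x * x⁻¹ + (x + x * x) * (1 + x)⁻¹ := by noncomm_ring
      have h3 : x * x * x⁻¹ = x := by rw [mul_assoc, e1, mul_one]
      have h4 : (x + x * x) * (1 + x)⁻¹ = x := by
        rw [hfac, mul_assoc, e2, mul_one]
      rw [expand, e1, h3, h4, add_assoc, hdbl, add_zero]
    have hinv : (x + x * x)⁻¹ = x⁻¹ + (1 + x)⁻¹ :=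
      inv_eq_of_mul_eq_one_right hu
    have hxinv : f x⁻¹ = f x := (h x hx).symm
    have hx1inv : f (1 + x)⁻¹ = f (1 + x) := (h (1 + x) hx1).symm
    calc f (x + x * x) = f (x + x * x)⁻¹ := h _ hune
      _ = f (x⁻¹ + (1 + x)⁻¹) := by rw [hinv]
      _ = f x⁻¹ + f (1 + x)⁻¹ := hf _ _
      _ = f x + (f 1 + f x) := by rw [hxinv, hx1inv, hf]
      _ = f 1 + (f x + f x) := by abel
      _ = f 1 := by rw [hdbl, add_zero]
  intro x
  by_cases hx : x = 0
  · subst hx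
    simpa using hf0
  by_cases hx1 : (1 : D) + x = 0
  · have hxe : x = 1 := by
      have : x = -1 := eq_neg_of_add_eq_zero_right hx1
      rw [this, CharTwo.neg_eq]
    subst hxe
    have : (1 : D) ^ 4 + 1 = 0 := by
      rw [one_pow]; exact hdbl 1
    rw [this, hf0]
  · have hy : x * x ≠ 0 := mul_ne_zero hx hx
    have hy1 : (1 : D) + x * x ≠ 0 := by
      have e : (1 + x) * (1 + x) = 1 + (x + x) + x * x := by noncomm_ring
      have : (1 : D) + x * x = (1 + x) * (1 + x) := by
        rw [e, hdbl, add_zero]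
      rw [this]
      exact mul_ne_zero hx1 hx1
    have k1 := key x hx hx1
    have k2 := key (x * x) hy hy1
    have esum : x ^ 4 + x = (x * x + (x * x) * (x * x)) + (x + x * x) := by
      have hd := hdbl (x * x)
      have e : (x * x + (x * x) * (x * x)) + (x + x * x)
          = x ^ 4 + x + (x * x + x * x) := by noncomm_ring
      rw [e, hd, add_zero]
    rw [esum, hf, k1, k2, hdbl]
end

section
/- Let D be a noncommutative division ring of characteristic different from 2, and let f, g : D → D be additive maps such that f(x) = g(x⁻¹) for all nonzero x ∈ D. Then g = -f; in particular f(x) = -f(x⁻¹) for all nonzero x ∈ D. -/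
private lemma hua_aux {D : Type*} [DivisionRing D] {x : D} (hx : x ≠ 0) (hx1 : x ≠ 1) :
    (x⁻¹ - 1)⁻¹ = (1 - x)⁻¹ - 1 := by
  have h1x : (1 : D) - x ≠ 0 := sub_ne_zero.mpr (Ne.symm hx1)
  have h1 : x⁻¹ - 1 = x⁻¹ * (1 - x) := by
    rw [mul_sub, mul_one, inv_mul_cancel₀ hx]
  have h2 : (1 - x)⁻¹ * x = (1 - x)⁻¹ - 1 := by
    have h3 : (1 - x)⁻¹ * x = (1 - x)⁻¹ * (1 - (1 - x)) := by
      congr 1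
      abel
    rw [h3, mul_sub, mul_one, inv_mul_cancel₀ h1x]
  rw [h1, mul_inv_rev, inv_inv, h2]

theorem stmt_16 {D : Type*} [DivisionRing D]
    (hnc : ∃ a b : D, a * b ≠ b * a)
    (hchar : ringChar D ≠ 2)
    (f g : D → D)
    (hf : ∀ x y : D, f (x + y) = f x + f y)
    (hg : ∀ x y : D, g (x + y) = g x + g y)
    (h : ∀ x : D, x ≠ 0 → f x = g x⁻¹) :
    g = -f ∧ ∀ x : D, x ≠ 0 → f x = -f x⁻¹ := by
  obtain ⟨a, b, hab⟩ := hnc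
  have two_ne : (2 : D) ≠ 0 := Ring.two_ne_zero hchar
  have f0 : f 0 = 0 := by
    have h0 := hf 0 0
    rw [add_zero] at h0
    exact add_eq_right.mp h0.symm
  have g0 : g 0 = 0 := by
    have h0 := hg 0 0
    rw [add_zero] at h0
    exact add_eq_right.mp h0.symm
  have fneg : ∀ x : D, f (-x) = -f x := by
    intro x
    have h0 := hf x (-x)
    rw [add_neg_cancel, f0] at h0
    exact eq_neg_of_add_eq_zero_right h0.symm
  have gneg : ∀ x : D, g (-x) = -g x := by
    intro x
    have h0 := hg x (-x)
    rw [add_neg_cancel, g0] at h0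
    exact eq_neg_of_add_eq_zero_right h0.symm
  have fsub : ∀ x y : D, f (x - y) = f x - f y := by
    intro x y
    rw [sub_eq_add_neg, hf, fneg, sub_eq_add_neg]
  have gsub : ∀ x y : D, g (x - y) = g x - g y := by
    intro x y
    rw [sub_eq_add_neg, hg, gneg, sub_eq_add_neg]
  have g1 : g 1 = f 1 := by
    have hh := h 1 one_ne_zero
    rw [inv_one] at hh
    exact hh.symm
  -- key identity : f x + f x⁻¹ = f 1 for x ≠ 0, 1
  have key : ∀ x : D, x ≠ 0 → x ≠ 1 → f x + f x⁻¹ = f 1 := by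
    intro x hx hx1
    have hxi1 : x⁻¹ - 1 ≠ 0 := by
      intro hc
      apply hx1
      have hxi : x⁻¹ = 1 := sub_eq_zero.mp hc
      rw [← inv_inv x, hxi, inv_one]
    have h1x : (1 : D) - x ≠ 0 := sub_ne_zero.mpr (Ne.symm hx1)
    have e1 : f (x⁻¹ - 1) = g ((x⁻¹ - 1)⁻¹) := h _ hxi1
    rw [hua_aux hx hx1, fsub, gsub, g1, (h _ h1x).symm, fsub] at e1
    -- e1 : f x⁻¹ - f 1 = (f 1 - f x) - f 1
    have e2 : f x⁻¹ = f 1 - f x := by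
      have e3 := sub_eq_iff_eq_add.mp e1
      rw [e3]; abel
    rw [e2]; abel
  have ha0 : a ≠ 0 := by rintro rfl; simp at hab
  have ha1 : a ≠ 1 := by rintro rfl; simp at hab
  have han1 : a ≠ -1 := by rintro rfl; simp at hab
  have f1 : f 1 = 0 := by
    have k1 := key a ha0 ha1
    have k2 := key (-a) (neg_ne_zero.mpr ha0)
      (by intro hc; exact han1 (neg_eq_iff_eq_neg.mp hc))
    rw [inv_neg, fneg, fneg] at k2
    have hsum : f 1 + f 1 = 0 := by
      linear_combination (norm := abel1) -k1 - k2
    have h2 : (2 : D) * f 1 = 0 := by rw [two_mul]; exact hsum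
    exact (mul_eq_zero.mp h2).resolve_left two_ne
  have main : ∀ x : D, x ≠ 0 → f x = -f x⁻¹ := by
    intro x hx
    by_cases hx1 : x = 1
    · subst hx1
      rw [inv_one, f1, neg_zero]
    · have k := key x hx hx1
      rw [f1] at k
      exact eq_neg_of_add_eq_zero_left k
  refine ⟨?_, main⟩
  funext x
  by_cases hx : x = 0
  · subst hx
    simp [g0, f0]
  · have e1 : f x⁻¹ = g x := by
      have := h x⁻¹ (inv_ne_zero hx)
      rwa [inv_inv] at this
    have e2 : f x⁻¹ = -f x := by
      have := main x⁻¹ (inv_ne_zero hx)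
      rwa [inv_inv] at this
    simp only [Pi.neg_apply]
    rw [← e1, e2]
end

section
/- Let D be a noncommutative division ring of characteristic 2, let n ≥ 2 be an integer, and let f : D → D be an additive map such that f(x) = xⁿ · f(x⁻¹) for all nonzero x ∈ D and f(a²) = 0 for all a ∈ D. Then for all nonzero a, b ∈ D with f(ab) ≠ 0, one has (ab)ⁿ = (ba)ⁿ. -/
theorem stmt_17 {D : Type*} [DivisionRing D] [CharP D 2]
    (hnc : ∃ a b : D, a * b ≠ b * a)
    (n : ℕ) (hn : 2 ≤ n)
    (f : D → D)
    (hf : ∀ x y : D, f (x + y) = f x + f y)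
    (h : ∀ x : D, x ≠ 0 → f x = x ^ n * f x⁻¹)
    (hsq : ∀ a : D, f (a ^ 2) = 0) :
    ∀ a b : D, a ≠ 0 → b ≠ 0 → f (a * b) ≠ 0 → (a * b) ^ n = (b * a) ^ n := by
  haveI : Fact (Nat.Prime 2) := ⟨Nat.prime_two⟩
  have hcomm : ∀ x y : D, f (x * y) = f (y * x) := by
    intro x y
    have hexp : (x + y) ^ 2 = x ^ 2 + (x * y + (y * x + y ^ 2)) := by noncomm_ring
    have h0 : (0 : D) = f (x ^ 2) + (f (x * y) + (f (y * x) + f (y ^ 2))) := by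
      rw [← hf, ← hf, ← hf, ← hexp, hsq]
    rw [hsq, hsq, zero_add, add_zero] at h0
    have := eq_neg_of_add_eq_zero_left h0.symm
    rwa [CharTwo.neg_eq] at this
  intro a b ha hb hfab
  have hab : a * b ≠ 0 := mul_ne_zero ha hb
  have hba : b * a ≠ 0 := mul_ne_zero hb ha
  have e1 : f (a * b) = (a * b) ^ n * f (b⁻¹ * a⁻¹) := by
    rw [h _ hab, mul_inv_rev]
  have e2 : f (a * b) = (b * a) ^ n * f (b⁻¹ * a⁻¹) := by
    rw [hcomm a b, h _ hba, mul_inv_rev, hcomm a⁻¹ b⁻¹]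
  have hc : f (b⁻¹ * a⁻¹) ≠ 0 := by
    intro hz
    apply hfab
    rw [e1, hz, mul_zero]
  exact mul_right_cancel₀ hc (e1.symm.trans e2)
end

section
/- Let D be a division ring which is not a field, with characteristic different from 2, and let f, g : D → D be additive maps satisfying f(x) + x² · g(x⁻¹) = 0 for all nonzero x ∈ D. Then there exists a fixed element q ∈ D such that f(x) = xq and g(x) = -xq for all x ∈ D. -/
/-- Herstein-type pointwise lemma: if `y` does not commute with some element of a
division ring of characteristic `≠ 2`, then the inner derivation by `y` is not
square-zero, i.e. there is `x` with `[y,[y,x]] ≠ 0`. -/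
lemma aux_herstein {D : Type*} [DivisionRing D] (two_ne : (2:D) ≠ 0) (y : D)
    (hy : ∃ u : D, y*u ≠ u*y) :
    ∃ x : D, y*(y*x - x*y) - (y*x - x*y)*y ≠ 0 := by
  by_contra hcon
  push_neg at hcon
  obtain ⟨x₀, hx₀⟩ := hy
  have hc0 : y*x₀ - x₀*y ≠ 0 := sub_ne_zero.mpr hx₀
  have hcy : y*(y*x₀ - x₀*y) = (y*x₀ - x₀*y)*y := sub_eq_zero.mp (hcon x₀)
  have hcy' : Commute y (y*x₀ - x₀*y) := hcy
  have hcyinv : y * (y*x₀ - x₀*y)⁻¹ = (y*x₀ - x₀*y)⁻¹ * y := (Commute.inv_right₀ hcy').eq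
  have hw : y*((y*x₀ - x₀*y)⁻¹*x₀) - ((y*x₀ - x₀*y)⁻¹*x₀)*y = 1 := by
    have h1 : y*((y*x₀ - x₀*y)⁻¹*x₀) = (y*x₀ - x₀*y)⁻¹*(y*x₀) := by
      rw [← mul_assoc, hcyinv, mul_assoc]
    rw [h1]
    have h2 : (y*x₀ - x₀*y)⁻¹ * (y*x₀ - x₀*y) = 1 := inv_mul_cancel₀ hc0
    linear_combination (norm := noncomm_ring) h2
  obtain ⟨w, hw⟩ : ∃ w : D, y*w - w*y = 1 := ⟨_, hw⟩
  have h3 := hcon (w*w)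
  have h4 : y*(w*w) - (w*w)*y = w + w := by
    linear_combination (norm := noncomm_ring) hw * w + w * hw
  rw [h4] at h3
  have h6 : y*(w+w) - (w+w)*y = 2 := by
    have e : y*(w+w) - (w+w)*y = (y*w - w*y) + (y*w - w*y) := by noncomm_ring
    rw [e, hw]; norm_num
  exact two_ne (h6.symm.trans h3)

/-- Key algebraic consequence of the Jordan-left-derivation property:
`[y,[y,x]] ⬝ F y = 0` for all `x, y`. -/
lemma aux_key {D : Type*} [DivisionRing D] (two_ne : (2:D) ≠ 0) (F : D → D)
    (hF : ∀ x y : D, F (x+y) = F x + F y) (hsq : ∀ a : D, F (a*a) = 2*a*F a)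
    (x y : D) :
    (x*y*y + y*y*x - 2*(y*x*y)) * F y = 0 := by
  have J : ∀ a b : D, F (a*b + b*a) = 2*a*F b + 2*b*F a := by
    intro a b
    have h1 := hsq (a+b)
    have e : (a+b)*(a+b) = a*a + (b*b + (a*b + b*a)) := by noncomm_ring
    rw [e, hF (a*a) (b*b + (a*b + b*a)), hF (b*b) (a*b + b*a), hsq a, hsq b,
      hF a b] at h1
    linear_combination (norm := noncomm_ring) h1
  have A : ∀ s t : D, F (s*t*s) = s*s*F t + 3*(s*t)*F s - t*s*F s := by
    intro s t
    have e1 := J s t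
    have e2 := J (s*s) t
    rw [hsq s] at e2
    have e4 := J s (s*t + t*s)
    have harg : s*(s*t + t*s) + (s*t + t*s)*s
        = ((s*s)*t + t*(s*s)) + (s*t*s + s*t*s) := by noncomm_ring
    rw [harg, hF ((s*s)*t + t*(s*s)) (s*t*s + s*t*s), e2, hF (s*t*s) (s*t*s),
      e1] at e4
    refine mul_left_cancel₀ two_ne ?_
    linear_combination (norm := noncomm_ring) e4
  have feq : ∀ s t : D, (s*t - t*s) * F (s*t)
      = (s*t*t - t*s*t)*F s + (3*(s*t*s) - s*s*t - 2*(t*s*s))*F t := by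
    intro s t
    have eE : F (s*t) + F (t*s) = 2*s*F t + 2*t*F s := by
      rw [← hF (s*t) (t*s)]; exact J s t
    have e5 := J s (t*s*t)
    have harg : s*(t*s*t) + (t*s*t)*s = (s*t)*(s*t) + (t*s)*(t*s) := by
      noncomm_ring
    rw [harg, hF ((s*t)*(s*t)) ((t*s)*(t*s)), hsq (s*t), hsq (t*s), A t s] at e5
    refine mul_left_cancel₀ two_ne ?_
    linear_combination (norm := noncomm_ring) e5 - 2*(t*s)*eE
  have h1 := feq (x+y) y
  have h2 := feq x y
  have harg : (x+y)*y = x*y + y*y := by noncomm_ring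
  rw [harg, hF (x*y) (y*y), hsq y, hF x y] at h1
  linear_combination (norm := noncomm_ring) h2 - h1

theorem stmt_18 {D : Type*} [DivisionRing D]
    (hnc : ∃ a b : D, a * b ≠ b * a)
    (hchar : ringChar D ≠ 2)
    (f g : D → D)
    (hf : ∀ x y : D, f (x + y) = f x + f y)
    (hg : ∀ x y : D, g (x + y) = g x + g y)
    (h : ∀ x : D, x ≠ 0 → f x + x ^ 2 * g x⁻¹ = 0) :
    ∃ q : D, (∀ x : D, f x = x * q) ∧ (∀ x : D, g x = -(x * q)) := by
  obtain ⟨a₀, b₀, hab⟩ := hnc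
  have two_ne : (2:D) ≠ 0 := Ring.two_ne_zero hchar
  -- basic additivity facts
  have f0 : f 0 = 0 := by have := hf 0 0; simpa using this.symm
  have g0 : g 0 = 0 := by have := hg 0 0; simpa using this.symm
  have fneg : ∀ z : D, f (-z) = -f z := by
    intro z
    have h1 := hf z (-z)
    rw [add_neg_cancel, f0] at h1
    exact eq_neg_of_add_eq_zero_right h1.symm
  have fsub : ∀ z w : D, f (z - w) = f z - f w := by
    intro z w
    rw [sub_eq_add_neg, hf, fneg, ← sub_eq_add_neg]
  have hg1 : g 1 = -f 1 := by
    have h1 := h 1 one_ne_zero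
    rw [inv_one, one_pow, one_mul] at h1
    exact eq_neg_of_add_eq_zero_right h1
  have hx2g : ∀ z : D, z ≠ 0 → z^2 * g z⁻¹ = - f z := by
    intro z hz
    exact eq_neg_of_add_eq_zero_right (h z hz)
  have hgfB : ∀ x : D, x ≠ 0 → x^2 * f x⁻¹ = - g x := by
    intro x hx
    have h1 := h x⁻¹ (inv_ne_zero hx)
    rw [inv_inv] at h1
    have e1 : x * x⁻¹ = 1 := mul_inv_cancel₀ hx
    have hxx1 : x^2 * x⁻¹^2 = 1 := by
      linear_combination (norm := noncomm_ring) x * e1 * x⁻¹ + e1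
    linear_combination (norm := noncomm_ring) x^2 * h1 - hxx1 * g x
  -- Step 2: g x = f x - 2 x f 1 for all x
  have step2 : ∀ x : D, g x = f x - 2*(x*f 1) := by
    intro x
    rcases eq_or_ne x 0 with rfl | hx0
    · rw [g0, f0]; noncomm_ring
    rcases eq_or_ne x 1 with rfl | hx1
    · linear_combination (norm := noncomm_ring) hg1
    have hu0 : (1:D) - x ≠ 0 := sub_ne_zero.mpr (Ne.symm hx1)
    have hxi1 : x⁻¹ ≠ 1 := fun h1 => hx1 (by rw [← inv_inv x, h1, inv_one])
    have hv0 : x⁻¹ - 1 ≠ 0 := sub_ne_zero.mpr hxi1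
    have e1 : x * x⁻¹ = 1 := mul_inv_cancel₀ hx0
    have hvdef : x⁻¹ - 1 = x⁻¹ * (1 - x) := by
      rw [mul_sub, mul_one, inv_mul_cancel₀ hx0]
    have hvinv : (x⁻¹ - 1)⁻¹ = (1-x)⁻¹ * x := by
      rw [hvdef, mul_inv_rev, inv_inv]
    have I1 : (1-x)⁻¹ = 1 + (x⁻¹ - 1)⁻¹ := by
      rw [hvinv]
      have h1 : (1-x)⁻¹ * (1-x) = 1 := inv_mul_cancel₀ hu0
      linear_combination (norm := noncomm_ring) h1
    have E1 : g ((1-x)⁻¹) = g 1 + g ((x⁻¹ - 1)⁻¹) := by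
      rw [I1]; exact hg 1 _
    rw [hg1] at E1
    have hA := hx2g (1-x) hu0
    rw [fsub 1 x] at hA
    have hB := hx2g (x⁻¹ - 1) hv0
    rw [fsub x⁻¹ 1] at hB
    have hC := hgfB x hx0
    have hsq2 : (1-x)^2 = x^2 * (x⁻¹ - 1)^2 := by
      linear_combination (norm := noncomm_ring) (2*x)*e1 - x * e1 * x⁻¹ - e1
    linear_combination (norm := noncomm_ring)
      hC - x^2 * hB - (1-x)^2 * E1 + hA - hsq2 * g ((x⁻¹-1)⁻¹)
  -- The map F z = f z - z f 1 satisfies the inverse identity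
  have hFinv : ∀ x : D, x ≠ 0 →
      x^2 * (f x⁻¹ - x⁻¹ * f 1) = -(f x - x * f 1) := by
    intro x hx
    have hC := hgfB x hx
    have hs2 := step2 x
    have e1 : x * x⁻¹ = 1 := mul_inv_cancel₀ hx
    have hxx : x^2 * x⁻¹ = x := by
      linear_combination (norm := noncomm_ring) x * e1
    linear_combination (norm := noncomm_ring) hC - hxx * f 1 - hs2
  -- F is a Jordan left derivation
  have hFadd : ∀ z w : D, (f (z+w) - (z+w)*f 1) = (f z - z*f 1) + (f w - w*f 1) := by
    intro z w
    rw [hf]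
    noncomm_ring
  have hFsq : ∀ a : D, f (a*a) - (a*a)*f 1 = 2*a*(f a - a*f 1) := by
    intro a
    rcases eq_or_ne a 0 with rfl | ha0
    · simp [f0]
    rcases eq_or_ne a 1 with rfl | ha1
    · simp
    have hu0 : (1:D) - a ≠ 0 := sub_ne_zero.mpr (Ne.symm ha1)
    have he0 : ((1:D)-a)*a ≠ 0 := mul_ne_zero hu0 ha0
    have hFe := hFinv ((1-a)*a) he0
    have hFa := hFinv a ha0
    have hFu := hFinv (1-a) hu0
    rw [fsub 1 a] at hFu
    have hsum : ((1-a)*a)⁻¹ = a⁻¹ + (1-a)⁻¹ := by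
      rw [mul_inv_rev]
      have h1 : (1-a) * (1-a)⁻¹ = 1 := mul_inv_cancel₀ hu0
      have h3 : a⁻¹ * a = 1 := inv_mul_cancel₀ ha0
      linear_combination (norm := noncomm_ring) h3 * (1-a)⁻¹ + a⁻¹ * h1
    rw [hsum, hf a⁻¹ (1-a)⁻¹] at hFe
    have hea : (1-a)*a = a - a*a := by noncomm_ring
    rw [hea, fsub a (a*a)] at hFe
    linear_combination (norm := noncomm_ring) (1-a)^2 * hFa + a^2 * hFu - hFe
  have key2 : ∀ x y : D, (x*y*y + y*y*x - 2*(y*x*y)) * (f y - y * f 1) = 0 :=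
    fun x y => aux_key two_ne (fun z => f z - z * f 1) hFadd hFsq x y
  -- conclude F = 0
  have main : ∀ y : D, (∃ u : D, y*u ≠ u*y) → f y - y*f 1 = 0 := by
    intro y hy
    obtain ⟨x, hx⟩ := aux_herstein two_ne y hy
    have hk := key2 x y
    have hco : x*y*y + y*y*x - 2*(y*x*y) = y*(y*x - x*y) - (y*x - x*y)*y := by
      noncomm_ring
    rw [hco] at hk
    rcases mul_eq_zero.mp hk with h' | h'
    · exact absurd h' hx
    · exact h'
  have hF0 : ∀ y : D, f y = y * f 1 := by
    intro y
    by_cases hy : ∃ u : D, y*u ≠ u*y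
    · exact sub_eq_zero.mp (main y hy)
    · push_neg at hy
      have hna : ∃ u : D, (y + a₀)*u ≠ u*(y + a₀) := by
        refine ⟨b₀, fun hcon => hab ?_⟩
        have hyb := hy b₀
        linear_combination (norm := noncomm_ring) hcon - hyb
      have h1 := main (y + a₀) hna
      have h2 := main a₀ ⟨b₀, hab⟩
      have h3 : f (y + a₀) = f y + f a₀ := hf _ _
      have h4 : f y - y * f 1 = 0 := by
        linear_combination (norm := noncomm_ring) h1 - h2 - h3
      exact sub_eq_zero.mp h4
  refine ⟨f 1, fun x => hF0 x, fun x => ?_⟩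
  have h1 := step2 x
  have h2 := hF0 x
  linear_combination (norm := noncomm_ring) h1 + h2
end
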